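/- arXiv:1012.0388 — 14 statements merged into one kernel-verified Lean document; each statement's English description precedes it below -/
import Mathlib

section
/- Let R be a commutative ring and let I and J be ideals of R with I ∩ J = 0. Let x ∈ I and y ∈ J. Then for any finite compositions θ = δ₁ ∘ ⋯ ∘ δ_p and θ' = δ'₁ ∘ ⋯ ∘ δ'_q of derivations of R (where the δ's and δ''s are arbitrary derivations of R, and empty compositions, i.e. the identity map, are allowed), one has θ(x) · θ'(y) = 0. -/
/-- The composition `δ₁ ∘ ⋯ ∘ δ_p` of a finite list of derivations of `R`
(the empty list giving the identity map of `R`). -/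
def List.derComp {R : Type*} [CommRing R] (l : List (Derivation ℤ R R)) : R → R :=
  l.foldr (fun (d : Derivation ℤ R R) (f : R → R) => ⇑d ∘ f) id

private lemma derComp_nil {R : Type*} [CommRing R] (x : R) :
    ([] : List (Derivation ℤ R R)).derComp x = x := rfl

private lemma derComp_cons {R : Type*} [CommRing R] (d : Derivation ℤ R R)
    (l : List (Derivation ℤ R R)) (x : R) :
    (d :: l).derComp x = d (l.derComp x) := rfl

/-- Shift lemma: assuming all products of smaller total length vanish, a product
`θ(x) * θ'(y)` equals, up to sign, `x * θ''(y)` where `θ''` is the interleaving. -/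
private lemma derComp_shift {R : Type*} [CommRing R] (x y : R) (n : ℕ)
    (H : ∀ a b : List (Derivation ℤ R R), a.length + b.length < n →
      a.derComp x * b.derComp y = 0) :
    ∀ l l' : List (Derivation ℤ R R), l.length + l'.length = n →
      l.derComp x * l'.derComp y =
        (-1 : R) ^ l.length * (x * ((l.reverse ++ l').derComp y)) := by
  intro l
  induction l with
  | nil =>
      intro l' hlen
      simp [derComp_nil]
  | cons d m IH =>
      intro l' hlen
      have hlt : m.length + l'.length < n := by
        simp only [List.length_cons] at hlen; omega
      have h0 : m.derComp x * l'.derComp y = 0 := H m l' hlt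
      have hleib := d.leibniz (m.derComp x) (l'.derComp y)
      rw [h0, map_zero, smul_eq_mul, smul_eq_mul] at hleib
      -- hleib : 0 = m.derComp x * d (l'.derComp y) + l'.derComp y * d (m.derComp x)
      have key : (d :: m).derComp x * l'.derComp y
          = -(m.derComp x * (d :: l').derComp y) := by
        rw [derComp_cons, derComp_cons]
        linear_combination -hleib
      rw [key, IH (d :: l') (by simp only [List.length_cons] at hlen ⊢; omega)]
      have hlist : m.reverse ++ (d :: l') = (d :: m).reverse ++ l' := by
        simp
      rw [hlist]
      simp only [List.length_cons]
      ring

private lemma derComp_main {R : Type*} [CommRing R] (I J : Ideal R) (hIJ : I ⊓ J = ⊥)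
    (x y : R) (hx : x ∈ I) (hy : y ∈ J) :
    ∀ n : ℕ, ∀ l l' : List (Derivation ℤ R R), l.length + l'.length = n →
      l.derComp x * l'.derComp y = 0 := by
  intro n
  induction n using Nat.strong_induction_on with
  | _ n IH =>
    intro l l' hlen
    have H : ∀ a b : List (Derivation ℤ R R), a.length + b.length < n →
        a.derComp x * b.derComp y = 0 := fun a b h => IH _ h a b rfl
    have H' : ∀ a b : List (Derivation ℤ R R), a.length + b.length < n →
        a.derComp y * b.derComp x = 0 := by
      intro a b h
      rw [mul_comm]
      exact H b a (by omega)
    have h1 := derComp_shift x y n H l l' hlen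
    set M := l.reverse ++ l' with hMdef
    have hM : M.length = n := by
      simp only [hMdef, List.length_append, List.length_reverse]; omega
    have h2 := derComp_shift y x n H' M [] (by simpa using hM)
    rw [derComp_nil, List.append_nil] at h2
    -- h2 : M.derComp y * x = (-1)^M.length * (y * (M.reverse.derComp x))
    have hI : x * M.derComp y ∈ I := I.mul_mem_right _ hx
    have hJ : x * M.derComp y ∈ J := by
      rw [mul_comm, h2]
      exact J.mul_mem_left _ (J.mul_mem_right _ hy)
    have hzero : x * M.derComp y = 0 := by
      have : x * M.derComp y ∈ I ⊓ J := ⟨hI, hJ⟩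
      rwa [hIJ, Ideal.mem_bot] at this
    rw [h1, hzero, mul_zero]

/-- If `I` and `J` are ideals of a commutative ring `R` with `I ∩ J = 0`, `x ∈ I`,
`y ∈ J`, then for all finite compositions `θ`, `θ'` of derivations of `R`
one has `θ(x) * θ'(y) = 0`. -/
theorem stmt_0 {R : Type*} [CommRing R] (I J : Ideal R) (hIJ : I ⊓ J = ⊥)
    (x y : R) (hx : x ∈ I) (hy : y ∈ J)
    (l l' : List (Derivation ℤ R R)) :
    l.derComp x * l'.derComp y = 0 := by
  exact derComp_main I J hIJ x y hx hy _ l l' rfl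
end

section
/- Let R be a commutative ring and let I and J be ideals of R with I ∩ J = 0. Let [I] denote the ideal of R generated by all elements θ(x), where x ranges over I and θ ranges over all finite compositions of derivations of R (including the identity map), and define [J] similarly. Then every element z of [I] ∩ [J] satisfies z² = 0. -/
/-- `[I]`: the ideal of `R` generated by all elements `θ(x)` where `x ∈ I` and `θ`
is a finite composition of derivations of `R` (including the identity map). -/
def derClosure {R : Type*} [CommRing R] (I : Ideal R) : Ideal R :=
  Ideal.span {z : R | ∃ x ∈ I, ∃ l : List (Derivation ℤ R R), z = l.derComp x}

namespace DerClosureAux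

variable {R : Type*} [CommRing R]

@[simp] lemma derComp_nil (x : R) : ([] : List (Derivation ℤ R R)).derComp x = x := rfl

@[simp] lemma derComp_cons (d : Derivation ℤ R R) (l : List (Derivation ℤ R R)) (x : R) :
    (d :: l).derComp x = d (l.derComp x) := rfl

/-- If `a * b = 0` then `(d a) * b = -(a * d b)`. -/
lemma deriv_mul_eq_neg (d : Derivation ℤ R R) {a b : R} (h : a * b = 0) :
    d a * b = -(a * d b) := by
  have h0 : d (a * b) = 0 := by rw [h, map_zero]
  rw [d.leibniz, smul_eq_mul, smul_eq_mul] at h0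
  linear_combination h0

/-- Key lemma: under `I ⊓ J = ⊥`, any product `θ(x) * φ(y)` with `x ∈ I`, `y ∈ J` vanishes. -/
lemma key (I J : Ideal R) (hIJ : I ⊓ J = ⊥) :
    ∀ (n : ℕ) (l m : List (Derivation ℤ R R)) (x y : R), x ∈ I → y ∈ J →
      l.length + m.length = n → l.derComp x * m.derComp y = 0 := by
  intro n
  induction n using Nat.strong_induction_on with
  | _ n ih =>
    intro l m x y hx hy hlen
    -- move all derivations from the `x` side onto the `y` side
    have moveL : ∀ (l₁ m₁ : List (Derivation ℤ R R)), l₁.length + m₁.length = n →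
        l₁.derComp x * m₁.derComp y
          = (-1 : R) ^ l₁.length * (x * ((l₁.reverse ++ m₁).derComp y)) := by
      intro l₁
      induction l₁ with
      | nil => intro m₁ _; simp
      | cons d l₂ ihl =>
        intro m₁ h
        have hz : l₂.derComp x * m₁.derComp y = 0 :=
          ih (l₂.length + m₁.length) (by simp at h; omega) l₂ m₁ x y hx hy rfl
        have step := deriv_mul_eq_neg d hz
        have hrec := ihl (d :: m₁) (by simp at h ⊢; omega)
        have hlist : (l₂.reverse ++ (d :: m₁)) = ((d :: l₂).reverse ++ m₁) := by
          simp
        rw [hlist] at hrec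
        calc (d :: l₂).derComp x * m₁.derComp y
            = d (l₂.derComp x) * m₁.derComp y := rfl
          _ = -(l₂.derComp x * (d :: m₁).derComp y) := step
          _ = -((-1 : R) ^ l₂.length * (x * (((d :: l₂).reverse ++ m₁).derComp y))) := by
              rw [hrec]
          _ = (-1 : R) ^ (d :: l₂).length * (x * (((d :: l₂).reverse ++ m₁).derComp y)) := by
              rw [List.length_cons, pow_succ]; ring
    -- move all derivations from the `y` side onto the `x` side
    have moveR : ∀ (m₁ l₁ : List (Derivation ℤ R R)), l₁.length + m₁.length = n →
        l₁.derComp x * m₁.derComp y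
          = (-1 : R) ^ m₁.length * (((m₁.reverse ++ l₁).derComp x) * y) := by
      intro m₁
      induction m₁ with
      | nil => intro l₁ _; simp
      | cons d m₂ ihm =>
        intro l₁ h
        have hz : l₁.derComp x * m₂.derComp y = 0 :=
          ih (l₁.length + m₂.length) (by simp at h; omega) l₁ m₂ x y hx hy rfl
        have hz' : m₂.derComp y * l₁.derComp x = 0 := by rw [mul_comm] at hz; exact hz
        have step := deriv_mul_eq_neg d hz'
        have hrec := ihm (d :: l₁) (by simp at h ⊢; omega)
        have hlist : (m₂.reverse ++ (d :: l₁)) = ((d :: m₂).reverse ++ l₁) := by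
          simp
        rw [hlist] at hrec
        calc l₁.derComp x * (d :: m₂).derComp y
            = d (m₂.derComp y) * l₁.derComp x := by rw [mul_comm]; rfl
          _ = -(m₂.derComp y * (d :: l₁).derComp x) := step
          _ = -((d :: l₁).derComp x * m₂.derComp y) := by ring_nf
          _ = -((-1 : R) ^ m₂.length * (((d :: m₂).reverse ++ l₁).derComp x * y)) := by
              rw [hrec]
          _ = (-1 : R) ^ (d :: m₂).length * (((d :: m₂).reverse ++ l₁).derComp x * y) := by
              rw [List.length_cons, pow_succ]; ring
    -- the product lies in `I` and in `J`, hence is zero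
    have hI : l.derComp x * m.derComp y ∈ I := by
      rw [moveL l m hlen]
      exact Ideal.mul_mem_left _ _ (Ideal.mul_mem_right _ _ hx)
    have hJ : l.derComp x * m.derComp y ∈ J := by
      rw [moveR m l hlen]
      exact Ideal.mul_mem_left _ _ (Ideal.mul_mem_left _ _ hy)
    have : l.derComp x * m.derComp y ∈ I ⊓ J := ⟨hI, hJ⟩
    rwa [hIJ, Ideal.mem_bot] at this

end DerClosureAux

/-- If `I ∩ J = 0`, then every element `z` of `[I] ∩ [J]` satisfies `z ^ 2 = 0`. -/
theorem stmt_1 {R : Type*} [CommRing R] (I J : Ideal R) (hIJ : I ⊓ J = ⊥) :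
    ∀ z ∈ derClosure I ⊓ derClosure J, z ^ 2 = 0 := by
  intro z hz
  obtain ⟨hzI, hzJ⟩ := hz
  -- every product of an element of `[I]` with an element of `[J]` vanishes
  have hgen : ∀ a ∈ {z : R | ∃ x ∈ I, ∃ l : List (Derivation ℤ R R), z = l.derComp x},
      ∀ b ∈ derClosure J, a * b = 0 := by
    rintro a ⟨x, hx, l, rfl⟩ b hb
    induction hb using Submodule.span_induction with
    | mem b hb =>
      obtain ⟨y, hy, m, rfl⟩ := hb
      exact DerClosureAux.key I J hIJ (l.length + m.length) l m x y hx hy rfl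
    | zero => rw [mul_zero]
    | add u v _ _ hu hv => rw [mul_add, hu, hv, add_zero]
    | smul r u _ hu => rw [smul_eq_mul, mul_comm r u, ← mul_assoc, hu, zero_mul]
  have hmul : ∀ a ∈ derClosure I, a * z = 0 := by
    intro a ha
    induction ha using Submodule.span_induction with
    | mem a haS => exact hgen a haS z hzJ
    | zero => rw [zero_mul]
    | add u v _ _ hu hv => rw [add_mul, hu, hv, add_zero]
    | smul r u _ hu => rw [smul_eq_mul, mul_assoc, hu, mul_zero]
  rw [pow_two]
  exact hmul z hzI
end

section
/- Let R be a commutative ring that is a ℚ-algebra, let x ∈ R with xⁿ = 0 for some integer n ≥ 1, and let d be a derivation of R. Then for every ℓ ∈ {1, …, n}, one has (d x)^(2ℓ−1) · x^(n−ℓ) = 0. In particular (d x)^(2n−1) = 0. -/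
lemma nat_cancel {R : Type*} [CommRing R] [Algebra ℚ R] (m : ℕ) (hm : m ≠ 0)
    (r : R) (h : (m : R) * r = 0) : r = 0 := by
  have h1 : (m : ℚ) • r = 0 := by
    rw [Algebra.smul_def, map_natCast]; exact h
  have h2 : ((m:ℚ)⁻¹ * (m:ℚ)) • r = 0 := by rw [mul_smul, h1, smul_zero]
  rwa [inv_mul_cancel₀ (by exact_mod_cast hm), one_smul] at h2

/-- Let `R` be a commutative `ℚ`-algebra, `x ∈ R` with `x ^ n = 0` (`n ≥ 1`) and `d`
a derivation of `R`. Then for every `ℓ ∈ {1, …, n}` one has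
`(d x) ^ (2ℓ - 1) * x ^ (n - ℓ) = 0`; in particular `(d x) ^ (2n - 1) = 0`. -/
theorem stmt_3 {R : Type*} [CommRing R] [Algebra ℚ R]
    (x : R) (n : ℕ) (hn : 1 ≤ n) (hx : x ^ n = 0) (d : Derivation ℤ R R) :
    (∀ ℓ : ℕ, 1 ≤ ℓ → ℓ ≤ n → (d x) ^ (2 * ℓ - 1) * x ^ (n - ℓ) = 0) ∧
      (d x) ^ (2 * n - 1) = 0 := by
  have key : ∀ m : ℕ, m + 1 ≤ n → (d x) ^ (2 * m + 1) * x ^ (n - (m + 1)) = 0 := by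
    intro m
    induction m with
    | zero =>
      intro _
      have h0 : d (x ^ n) = 0 := by rw [hx, map_zero]
      rw [d.leibniz_pow] at h0
      simp only [nsmul_eq_mul, smul_eq_mul] at h0
      refine nat_cancel n (by omega) _ ?_
      linear_combination h0
    | succ m ih =>
      intro hm
      have hprev := ih (by omega)
      have h0 : d ((d x) ^ (2 * m + 1) * x ^ (n - (m + 1))) = 0 := by
        rw [hprev, map_zero]
      rw [d.leibniz, d.leibniz_pow, d.leibniz_pow] at h0
      simp only [nsmul_eq_mul, smul_eq_mul, Nat.add_sub_cancel] at h0
      have h1 := congrArg (· * d x) h0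
      simp only [zero_mul] at h1
      have h2 : ((n - (m+1) : ℕ) : R) * ((d x) ^ (2 * (m+1) + 1) * x ^ (n - (m+1) - 1)) = 0 := by
        linear_combination h1 - ((2*m+1 : ℕ) : R) * d (d x) * hprev
      have h3 := nat_cancel (n - (m+1)) (by omega) _ h2
      have hsub : n - (m + 1 + 1) = n - (m + 1) - 1 := by omega
      rw [hsub]; exact h3
  have main : ∀ ℓ : ℕ, 1 ≤ ℓ → ℓ ≤ n → (d x) ^ (2 * ℓ - 1) * x ^ (n - ℓ) = 0 := by
    intro ℓ h1 h2
    obtain ⟨m, rfl⟩ : ∃ m, ℓ = m + 1 := ⟨ℓ - 1, by omega⟩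
    have e : 2 * (m + 1) - 1 = 2 * m + 1 := by omega
    rw [e]
    exact key m h2
  refine ⟨main, ?_⟩
  have := main n hn le_rfl
  simpa using this
end

section
/- Let R be a commutative ring that is a ℚ-algebra, let x ∈ R with xⁿ = 0 for some integer n ≥ 1, and let θ = d₁ ∘ ⋯ ∘ d_m be a composition of m derivations of R (m ≥ 0, the empty composition being the identity). Then θ(x)^(2^m·(n−1)+1) = 0. In particular, the nilradical of R is stable under every derivation of R. -/
private lemma cancel_nsmul {R : Type*} [CommRing R] [Algebra ℚ R]
    (m : ℕ) (hm : m ≠ 0) (y : R) (h : m • y = 0) : y = 0 := by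
  have h2 : ((m : ℚ)) • y = 0 := by rw [Nat.cast_smul_eq_nsmul]; exact h
  have hm' : (m : ℚ) ≠ 0 := Nat.cast_ne_zero.mpr hm
  calc y = (m : ℚ)⁻¹ • ((m : ℚ) • y) := (inv_smul_smul₀ hm' y).symm
    _ = 0 := by rw [h2, smul_zero]

private lemma key_aux {R : Type*} [CommRing R] [Algebra ℚ R]
    (d : Derivation ℤ R R) (x : R) (n : ℕ) (hn : 1 ≤ n) (hx : x ^ n = 0) :
    ∀ j, j ≤ n - 1 → x ^ (n - 1 - j) * d x ^ (2 * j + 1) = 0 := by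
  intro j
  induction j with
  | zero =>
    intro _
    have h0 : d (x ^ n) = 0 := by rw [hx]; simp
    rw [Derivation.leibniz_pow] at h0
    have := cancel_nsmul n (by omega) _ h0
    simpa [Nat.sub_zero, smul_eq_mul, mul_comm] using this
  | succ j ih =>
    intro hj
    have h := ih (by omega)
    have hd : d (x ^ (n - 1 - j) * d x ^ (2 * j + 1)) = 0 := by rw [h]; simp
    rw [Derivation.leibniz, Derivation.leibniz_pow, Derivation.leibniz_pow] at hd
    have hd2 := congrArg (fun z => z * d x) hd
    simp only [smul_eq_mul, add_mul, zero_mul, nsmul_eq_mul, Nat.add_sub_cancel] at hd2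
    have hkill : x ^ (n - 1 - j) * ((2 * j + 1 : ℕ) * (d x ^ (2 * j) * d (d x))) * d x
        = (2 * j + 1 : ℕ) * d (d x) * (x ^ (n - 1 - j) * d x ^ (2 * j + 1)) := by ring
    rw [hkill, h, mul_zero, zero_add] at hd2
    have hd3 : (n - 1 - j) • (x ^ (n - 1 - (j + 1)) * d x ^ (2 * (j + 1) + 1)) = 0 := by
      rw [nsmul_eq_mul]
      have e1 : n - 1 - j - 1 = n - 1 - (j + 1) := by omega
      calc (↑(n - 1 - j) : R) * (x ^ (n - 1 - (j + 1)) * d x ^ (2 * (j + 1) + 1))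
          = d x ^ (2 * j + 1) * ((n - 1 - j : ℕ) * (x ^ (n - 1 - j - 1) * d x)) * d x := by
            rw [e1]; ring_nf
        _ = 0 := hd2
    exact cancel_nsmul _ (by omega) _ hd3

private lemma key {R : Type*} [CommRing R] [Algebra ℚ R]
    (d : Derivation ℤ R R) (x : R) (n : ℕ) (hn : 1 ≤ n) (hx : x ^ n = 0) :
    d x ^ (2 * (n - 1) + 1) = 0 := by
  have := key_aux d x n hn hx (n - 1) le_rfl
  simpa using this

/-- Let `R` be a commutative `ℚ`-algebra and `x ∈ R` with `x ^ n = 0` (`n ≥ 1`). For any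
composition `θ = d₁ ∘ ⋯ ∘ d_m` of `m` derivations of `R`, one has
`θ(x) ^ (2 ^ m * (n - 1) + 1) = 0`. In particular the nilradical of `R` is stable
under every derivation of `R`. -/
theorem stmt_4 {R : Type*} [CommRing R] [Algebra ℚ R]
    (x : R) (n : ℕ) (hn : 1 ≤ n) (hx : x ^ n = 0)
    (l : List (Derivation ℤ R R)) :
    l.derComp x ^ (2 ^ l.length * (n - 1) + 1) = 0 ∧
      ∀ d : Derivation ℤ R R, ∀ z ∈ nilradical R, d z ∈ nilradical R := by
  constructor
  · induction l with
    | nil =>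
      simp only [List.derComp, List.foldr_nil, id, List.length_nil, pow_zero, one_mul]
      have : n - 1 + 1 = n := by omega
      rw [this]; exact hx
    | cons d t ih =>
      have hN : 1 ≤ 2 ^ t.length * (n - 1) + 1 := by omega
      have := key d (t.derComp x) _ hN ih
      have e : 2 * (2 ^ t.length * (n - 1) + 1 - 1) + 1 = 2 ^ (d :: t).length * (n - 1) + 1 := by
        simp [List.length_cons, pow_succ]; ring
      rw [e] at this
      exact this
  · intro d z hz
    obtain ⟨m, hm⟩ := hz
    have hm' : z ^ (m + 1) = 0 := by rw [pow_succ, hm, zero_mul]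
    exact ⟨2 * m + 1, by simpa using key d z (m + 1) (by omega) hm'⟩
end

section
/- Let R be a commutative ring that is a ℚ-algebra, equipped with a family (d_i)_{i ∈ Δ} of derivations. Let S be a multiplicatively closed subset of R containing 1, and let K be a Δ-ideal of R with K ∩ S = ∅. Let L be a Δ-ideal of R that is maximal (with respect to inclusion) among the Δ-ideals of R containing K and disjoint from S. Then L is a prime ideal. -/
section Aux

variable {R : Type*} [CommRing R] [Algebra ℚ R]

/-- In a `ℚ`-algebra, an ideal is closed under division by positive naturals. -/
lemma nsmul_mem_div {I : Ideal R} {z : R} {m : ℕ} (h : (m + 1) • z ∈ I) : z ∈ I := by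
  have h2 : algebraMap ℚ R ((m + 1 : ℚ)⁻¹) * ((m + 1) • z) ∈ I := I.mul_mem_left _ h
  have : algebraMap ℚ R ((m + 1 : ℚ)⁻¹) * ((m + 1) • z) = z := by
    rw [nsmul_eq_mul, ← mul_assoc, ← map_natCast (algebraMap ℚ R) (m + 1), ← map_mul,
      Nat.cast_add, Nat.cast_one, inv_mul_cancel₀ (by positivity : ((m : ℚ) + 1) ≠ 0),
      map_one, one_mul]
  rwa [this] at h2

lemma step_lemma (D : Derivation ℤ R R) {I : Ideal R} (hI : ∀ x ∈ I, D x ∈ I)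
    {x : R} (m k : ℕ) (h : x ^ (m + 1) * (D x) ^ k ∈ I) :
    x ^ m * (D x) ^ (k + 2) ∈ I := by
  set y := x ^ (m + 1) * (D x) ^ k with hy
  have hDy : D y ∈ I := hI y h
  have hDxk : D x * D ((D x) ^ k) = (k : R) * ((D x) ^ k * D (D x)) := by
    cases k with
    | zero => simp
    | succ k =>
      rw [Derivation.leibniz_pow]
      simp only [smul_eq_mul, nsmul_eq_mul, Nat.add_sub_cancel]
      push_cast
      ring
  have h1 : D y = x ^ (m + 1) • D (D x ^ k) + (D x ^ k) • D (x ^ (m + 1)) := by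
    rw [hy]; exact D.leibniz _ _
  have h2 : D (x ^ (m + 1)) = (m + 1) • x ^ m • D x := by
    rw [Derivation.leibniz_pow]; simp
  have key : ((m : R) + 1) * (x ^ m * (D x) ^ (k + 2)) =
      D x * D y - (k : R) * (D (D x) * y) := by
    rw [hy, h1, h2]
    simp only [smul_eq_mul, nsmul_eq_mul]
    push_cast
    linear_combination (-(x ^ (m + 1))) * hDxk
  have hmem : D x * D y - (k : R) * (D (D x) * y) ∈ I :=
    I.sub_mem (I.mul_mem_left _ hDy) (I.mul_mem_left _ (I.mul_mem_left _ h))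
  rw [← key] at hmem
  apply nsmul_mem_div (m := m)
  rw [nsmul_eq_mul]
  push_cast
  exact hmem

lemma descend (D : Derivation ℤ R R) {I : Ideal R} (hI : ∀ x ∈ I, D x ∈ I)
    {x : R} : ∀ m k, x ^ m * (D x) ^ k ∈ I → (D x) ^ (k + 2 * m) ∈ I := by
  intro m
  induction m with
  | zero => intro k h; simpa using h
  | succ m ih =>
    intro k h
    have := ih (k + 2) (step_lemma D hI m k h)
    have heq : k + 2 + 2 * m = k + 2 * (m + 1) := by ring
    rwa [heq] at this

/-- In a `ℚ`-algebra, the radical of a differential ideal is differential. -/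
lemma radical_diff (D : Derivation ℤ R R) {I : Ideal R} (hI : ∀ x ∈ I, D x ∈ I)
    {x : R} (hx : x ∈ I.radical) : D x ∈ I.radical := by
  obtain ⟨n, hn⟩ := hx
  have h0 : x ^ n * (D x) ^ 0 ∈ I := by simpa using hn
  exact ⟨0 + 2 * n, descend D hI n 0 h0⟩

/-- The ideal `{z | z * b ∈ L}`. -/
def quotIdeal (L : Ideal R) (b : R) : Ideal R where
  carrier := {z | z * b ∈ L}
  add_mem' := by
    intro z w hz hw
    simpa [add_mul] using L.add_mem hz hw
  zero_mem' := by simp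
  smul_mem' := by
    intro c z hz
    simp only [Set.mem_setOf_eq, smul_eq_mul, mul_assoc]
    exact L.mul_mem_left c hz

lemma mem_quotIdeal {L : Ideal R} {b z : R} : z ∈ quotIdeal L b ↔ z * b ∈ L := Iff.rfl

/-- If `L` is a radical differential ideal, so is `quotIdeal L b`. -/
lemma quotIdeal_diff (D : Derivation ℤ R R) {L : Ideal R} (hL : ∀ x ∈ L, D x ∈ L)
    (hrad : L.radical = L) (b : R) {z : R} (hz : z ∈ quotIdeal L b) :
    D z ∈ quotIdeal L b := by
  rw [mem_quotIdeal] at hz ⊢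
  have h1 : D (z * b) ∈ L := hL _ hz
  rw [Derivation.leibniz] at h1
  have h2 : b * (z • D b + b • D z) ∈ L := L.mul_mem_left b h1
  have h3 : b * (z • D b) ∈ L := by
    have : b * (z • D b) = (D b) * (z * b) := by simp only [smul_eq_mul]; ring
    rw [this]; exact L.mul_mem_left _ hz
  have h4 : D z * b ^ 2 ∈ L := by
    have : D z * b ^ 2 = b * (z • D b + b • D z) - b * (z • D b) := by
      simp only [smul_eq_mul]; ring
    rw [this]; exact L.sub_mem h2 h3
  have h5 : (D z * b) ^ 2 ∈ L := by
    have : (D z * b) ^ 2 = D z * (D z * b ^ 2) := by ring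
    rw [this]; exact L.mul_mem_left _ h4
  have : D z * b ∈ L.radical := ⟨2, h5⟩
  rwa [hrad] at this

end Aux

/-- Let `R` be a commutative `ℚ`-algebra equipped with a family `(d i)_{i ∈ Δ}` of
derivations, `S` a multiplicatively closed subset of `R` containing `1`, and `K` a
`Δ`-ideal disjoint from `S`. If `L` is a `Δ`-ideal containing `K`, disjoint from `S`,
and maximal (for inclusion) among such `Δ`-ideals, then `L` is prime. -/
theorem stmt_6 {R Δ : Type*} [CommRing R] [Algebra ℚ R]
    (d : Δ → Derivation ℤ R R) (S : Submonoid R) (K L : Ideal R)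
    (hK : ∀ i, ∀ x ∈ K, d i x ∈ K)
    (hKS : Disjoint (K : Set R) (S : Set R))
    (hL : ∀ i, ∀ x ∈ L, d i x ∈ L)
    (hKL : K ≤ L)
    (hLS : Disjoint (L : Set R) (S : Set R))
    (hmax : ∀ L' : Ideal R, (∀ i, ∀ x ∈ L', d i x ∈ L') → K ≤ L' →
      Disjoint (L' : Set R) (S : Set R) → L ≤ L' → L' = L) :
    L.IsPrime := by
  -- L is radical
  have hrad : L.radical = L := by
    apply hmax
    · exact fun i x hx => radical_diff (d i) (hL i) hx
    · exact hKL.trans Ideal.le_radical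
    · rw [Set.disjoint_left]
      rintro s ⟨n, hn⟩ hs
      exact Set.disjoint_left.mp hLS hn (pow_mem hs n)
    · exact Ideal.le_radical
  constructor
  · -- L ≠ ⊤
    intro h
    have h1 : (1 : R) ∈ L := h ▸ Submodule.mem_top
    exact Set.disjoint_left.mp hLS h1 S.one_mem
  · intro a b hab
    by_contra hcon
    push_neg at hcon
    obtain ⟨ha, hb⟩ := hcon
    -- auxiliary: for any c ∉ L, quotIdeal L c meets S if it contains L
    have key : ∀ c : R, c ∉ L → (∃ w, w ∉ L ∧ w ∈ quotIdeal L c) →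
        ∃ s ∈ S, s * c ∈ L := by
      intro c hc ⟨w, hwL, hw⟩
      have hLsub : L ≤ quotIdeal L c := fun z hz => L.mul_mem_right c hz
      by_cases hdisj : Disjoint ((quotIdeal L c : Ideal R) : Set R) (S : Set R)
      · have := hmax (quotIdeal L c)
          (fun i x hx => quotIdeal_diff (d i) (hL i) hrad c hx)
          (hKL.trans hLsub) hdisj hLsub
        exact absurd (this ▸ hw) hwL
      · rw [Set.not_disjoint_iff] at hdisj
        obtain ⟨s, hs1, hs2⟩ := hdisj
        exact ⟨s, hs2, hs1⟩
    -- first: ∃ s ∈ S with s * b ∈ L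
    obtain ⟨s, hsS, hsb⟩ := key b hb ⟨a, ha, by rwa [mem_quotIdeal]⟩
    -- second: ∃ t ∈ S with t * s ∈ L
    have hsL : s ∉ L := fun h => Set.disjoint_left.mp hLS h hsS
    obtain ⟨t, htS, hts⟩ := key s hsL ⟨b, hb, by rw [mem_quotIdeal, mul_comm]; exact hsb⟩
    exact Set.disjoint_left.mp hLS hts (S.mul_mem htS hsS)
end

section
/- Let R be a commutative ring that is a ℚ-algebra, equipped with a family (d_i)_{i ∈ Δ} of derivations. Then every minimal prime ideal 𝔭 of R is a Δ-ideal, i.e. d_i(𝔭) ⊆ 𝔭 for all i ∈ Δ. -/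
/-!
Localizing at a minimal prime `p` gives a zero-dimensional local ring, so every `x ∈ p` satisfies
`s * x ^ n = 0` for some `s ∉ p`. Differentiating `t * x ^ (m + 1) * (D x) ^ k = 0` and multiplying
by `t * D x` kills every term but `(m + 1) * t ^ 2 * x ^ m * (D x) ^ (k + 2)`; since `m + 1` is
invertible in a `ℚ`-algebra, the power of `x` drops by one at the cost of a larger power of `D x`
and the new factor `t ^ 2 ∉ p`. After `n` steps, `t * (D x) ^ (2 * n) = 0` with `t ∉ p`, so `D x ∈ p`.
-/

lemma isUnit_natCast_of_ne_zero {R : Type*} [CommRing R] [Algebra ℚ R] {n : ℕ} (hn : n ≠ 0) :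
    IsUnit (n : R) := by
  simpa using (isUnit_iff_ne_zero.mpr (Nat.cast_ne_zero.mpr hn : (n : ℚ) ≠ 0)).map (algebraMap ℚ R)

lemma Ideal.exists_mul_pow_eq_zero_of_mem_minimalPrimes {R : Type*} [CommRing R] {p : Ideal R}
    (hp : p ∈ minimalPrimes R) {x : R} (hx : x ∈ p) : ∃ s ∉ p, ∃ n : ℕ, s * x ^ n = 0 := by
  have : p.IsPrime := hp.1.1
  have : Ring.KrullDimLE 0 (Localization.AtPrime p) :=
    Ring.KrullDimLE.of_isLocalization p hp (Localization.AtPrime p)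
  obtain ⟨n, hn⟩ : IsNilpotent (algebraMap R (Localization.AtPrime p) x) :=
    Ring.KrullDimLE.isNilpotent_iff_mem_maximalIdeal.mpr
      ((IsLocalization.AtPrime.to_map_mem_maximal_iff _ p x).mpr hx)
  rw [← map_pow, IsLocalization.map_eq_zero_iff p.primeCompl] at hn
  obtain ⟨s, hs⟩ := hn
  exact ⟨s, s.2, n, hs⟩

namespace Derivation

variable {A R : Type*} [CommRing A] [CommRing R] [Algebra A R] (D : Derivation A R R)

lemma mul_map_pow (a : R) (n : ℕ) : a * D (a ^ n) = n * a ^ n * D a := by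
  cases n with
  | zero => simp
  | succ n => rw [leibniz_pow, Nat.add_sub_cancel, nsmul_eq_mul, smul_eq_mul]; ring

lemma natCast_mul_sq_mul_pow_mul_pow_eq_zero {t x : R} {m k : ℕ}
    (h : t * x ^ (m + 1) * D x ^ k = 0) :
    ((m + 1 : ℕ) : R) * (t ^ 2 * x ^ m * D x ^ (k + 2)) = 0 := by
  have hD : D (t * x ^ (m + 1) * D x ^ k) = 0 := by rw [h, map_zero]
  have hx : D (x ^ (m + 1)) = ((m + 1 : ℕ) : R) * x ^ m * D x := by
    rw [leibniz_pow, Nat.add_sub_cancel, nsmul_eq_mul, smul_eq_mul, mul_assoc]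
  have hDx := D.mul_map_pow (D x) k
  simp only [leibniz, smul_eq_mul, hx] at hD
  linear_combination (t * D x) * hD - (D t * D x + k * t * D (D x)) * h - t ^ 2 * x ^ (m + 1) * hDx

variable [Algebra ℚ R]

lemma sq_mul_pow_mul_pow_eq_zero {t x : R} {m k : ℕ} (h : t * x ^ (m + 1) * D x ^ k = 0) :
    t ^ 2 * x ^ m * D x ^ (k + 2) = 0 :=
  (isUnit_natCast_of_ne_zero m.succ_ne_zero).mul_right_eq_zero.mp
    (D.natCast_mul_sq_mul_pow_mul_pow_eq_zero h)

lemma pow_mem_of_mul_pow_mul_pow_eq_zero {p : Ideal R} [p.IsPrime] {x : R} (m : ℕ) :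
    ∀ {t : R} {k : ℕ}, t ∉ p → t * x ^ m * D x ^ k = 0 → D x ^ (2 * m + k) ∈ p := by
  induction m with
  | zero =>
    intro t k ht h
    rw [pow_zero, mul_one] at h
    simpa using (Ideal.IsPrime.mem_or_mem ‹_› (h ▸ p.zero_mem)).resolve_left ht
  | succ m ih =>
    intro t k ht h
    have ht2 : t ^ 2 ∉ p := fun h2 => ht (Ideal.IsPrime.mem_of_pow_mem ‹_› 2 h2)
    simpa only [Nat.mul_succ, Nat.add_right_comm, Nat.add_assoc] using
      ih ht2 (D.sq_mul_pow_mul_pow_eq_zero h)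

end Derivation

/-- Let `R` be a commutative `ℚ`-algebra equipped with a family `(d i)_{i ∈ Δ}` of
derivations. Then every minimal prime ideal `𝔭` of `R` is a `Δ`-ideal. -/
theorem stmt_7 {R Δ : Type*} [CommRing R] [Algebra ℚ R]
    (d : Δ → Derivation ℤ R R) (p : Ideal R) (hp : p ∈ minimalPrimes R) :
    ∀ i, ∀ x ∈ p, d i x ∈ p := by
  intro i x hx
  have : p.IsPrime := hp.1.1
  obtain ⟨s, hs, n, hsx⟩ := Ideal.exists_mul_pow_eq_zero_of_mem_minimalPrimes hp hx
  have hpow : d i x ^ (2 * n + 0) ∈ p :=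
    (d i).pow_mem_of_mul_pow_mul_pow_eq_zero n hs (by rw [pow_zero, mul_one]; exact hsx)
  exact this.mem_of_pow_mem _ hpow
end

section
/- Let R be a commutative ring that is a ℚ-algebra, equipped with a family (d_i)_{i ∈ Δ} of derivations, and let 𝔭 be a prime ideal of R. Define 𝔭_# := {x ∈ R : θ(x) ∈ 𝔭 for every finite composition θ of derivations from the family, including the identity map}. Then 𝔭_# is a prime ideal of R (and it is a Δ-ideal contained in 𝔭). -/
/-!
For a single derivation `D` this is Kaplansky's argument: if `x, y ∉ 𝔭_#`, take `m, n` minimal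
with `Dᵐ x ∉ 𝔭`, `Dⁿ y ∉ 𝔭`; modulo `𝔭` the Leibniz expansion of `D^(m+n) (x y)` reduces to
`(m+n choose m) Dᵐ x Dⁿ y`, and the binomial coefficient is a unit in a `ℚ`-algebra.
Iterating, the ideals `{x | d_{i₁}^{a₁} ⋯ d_{iₖ}^{aₖ} x ∈ 𝔭 for all aⱼ}` are prime. They form
a downward directed family (indexed by concatenation of the index lists) whose intersection
is `𝔭_#`, and a directed intersection of primes is prime.
-/

/-- The composition `d_{i₁} ∘ ⋯ ∘ d_{iₙ}` of the derivations of the family `d`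
indexed by the word `l` (the empty word giving the identity map of `R`). -/
def derWord {R Δ : Type*} [CommRing R] (d : Δ → Derivation ℤ R R) (l : List Δ) :
    R → R :=
  l.foldr (fun i (f : R → R) => ⇑(d i) ∘ f) id

open Finset

namespace Derivation

variable {S A : Type*} [CommSemiring S] [CommRing A] [Algebra S A] (D : Derivation S A A)

theorem iterate_apply_mul (n : ℕ) (a b : A) :
    D^[n] (a * b) = ∑ ij ∈ antidiagonal n, n.choose ij.1 • (D^[ij.1] a * D^[ij.2] b) := by
  induction n with
  | zero => simp
  | succ n ih =>
    rw [sum_antidiagonal_choose_succ_nsmul (fun i j => D^[i] a * D^[j] b) n]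
    simp only [Function.iterate_succ_apply', ih, map_sum, map_nsmul, leibniz, smul_eq_mul,
      smul_add, sum_add_distrib]
    congr 1
    refine sum_congr rfl fun ⟨i, j⟩ hij => ?_
    rw [n.choose_symm_of_eq_add (HasAntidiagonal.mem_antidiagonal.1 hij).symm, mul_comm]

/-- The largest `D`-stable ideal contained in `I`. -/
def coreIdeal (I : Ideal A) : Ideal A where
  carrier := {x | ∀ n, D^[n] x ∈ I}
  add_mem' hx hy n := by
    rw [iterate_map_add]
    exact I.add_mem (hx n) (hy n)
  zero_mem' n := by simp
  smul_mem' c x hx n := by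
    rw [smul_eq_mul, iterate_apply_mul]
    exact sum_mem fun ij _ => nsmul_mem (I.mul_mem_left _ (hx _)) _

variable {D}

theorem mem_coreIdeal {I : Ideal A} {x : A} : x ∈ D.coreIdeal I ↔ ∀ n, D^[n] x ∈ I := Iff.rfl

theorem coreIdeal_le (I : Ideal A) : D.coreIdeal I ≤ I := fun _ hx => hx 0

theorem coreIdeal_mono {I J : Ideal A} (h : I ≤ J) : D.coreIdeal I ≤ D.coreIdeal J :=
  fun _ hx n => h (hx n)

theorem isPrime_coreIdeal [Algebra ℚ A] {I : Ideal A} (hI : I.IsPrime) :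
    (D.coreIdeal I).IsPrime := by
  classical
  refine ⟨ne_top_of_le_ne_top hI.ne_top (coreIdeal_le I), fun {x y} hxy => ?_⟩
  by_contra! h
  simp only [mem_coreIdeal, not_forall] at h
  obtain ⟨hx, hy⟩ := h
  set m := Nat.find hx
  set n := Nat.find hy
  have hlow_x : ∀ k < m, D^[k] x ∈ I := fun k hk => not_not.1 (Nat.find_min hx hk)
  have hlow_y : ∀ k < n, D^[k] y ∈ I := fun k hk => not_not.1 (Nat.find_min hy hk)
  have hmn : (m, n) ∈ antidiagonal (m + n) := HasAntidiagonal.mem_antidiagonal.2 rfl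
  have hrest : ∑ ij ∈ (antidiagonal (m + n)).erase (m, n),
      (m + n).choose ij.1 • (D^[ij.1] x * D^[ij.2] y) ∈ I := by
    refine sum_mem fun ⟨i, j⟩ hij => nsmul_mem ?_ _
    obtain ⟨hne, hij⟩ := mem_erase.1 hij
    rw [HasAntidiagonal.mem_antidiagonal] at hij
    rcases lt_or_gt_of_ne (show i ≠ m by rintro rfl; exact hne (by simp; omega)) with h | h
    · exact I.mul_mem_right _ (hlow_x i h)
    · exact I.mul_mem_left _ (hlow_y j (by omega))
  have hlead : ((m + n).choose m : A) * (D^[m] x * D^[n] y) ∈ I := by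
    have := hxy (m + n)
    rw [iterate_apply_mul, ← add_sum_erase _ _ hmn, I.add_mem_iff_left hrest, nsmul_eq_mul] at this
    exact this
  have hunit : IsUnit ((m + n).choose m : A) := by
    simpa using ((Nat.cast_ne_zero.2 (Nat.choose_pos (m.le_add_right n)).ne' :
      ((m + n).choose m : ℚ) ≠ 0).isUnit.map (algebraMap ℚ A))
  rcases hI.mem_or_mem hlead with h | h
  · exact hI.ne_top (I.eq_top_of_isUnit_mem h hunit)
  rcases hI.mem_or_mem h with h | h
  · exact Nat.find_spec hx h
  · exact Nat.find_spec hy h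

end Derivation

theorem Ideal.isPrime_iInf_of_directed {R ι : Type*} [CommSemiring R] [Nonempty ι]
    {I : ι → Ideal R} (hdir : Directed (· ≥ ·) I) (hI : ∀ i, (I i).IsPrime) :
    (⨅ i, I i).IsPrime := by
  refine ⟨ne_top_of_le_ne_top (hI (Classical.arbitrary ι)).ne_top (iInf_le _ _),
    fun {x y} hxy => ?_⟩
  by_contra! h
  simp only [Ideal.mem_iInf, not_forall] at h
  obtain ⟨⟨i, hx⟩, ⟨j, hy⟩⟩ := h
  obtain ⟨k, hki, hkj⟩ := hdir i j
  rcases (hI k).mem_or_mem (Ideal.mem_iInf.1 hxy k) with h | h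
  · exact hx (hki h)
  · exact hy (hkj h)

section Words

variable {R Δ : Type*} [CommRing R] (d : Δ → Derivation ℤ R R)

theorem derWord_cons (i : Δ) (l : List Δ) : derWord d (i :: l) = d i ∘ derWord d l := rfl

theorem derWord_append (l₁ l₂ : List Δ) :
    derWord d (l₁ ++ l₂) = derWord d l₁ ∘ derWord d l₂ := by
  induction l₁ with
  | nil => rfl
  | cons i l ih => rw [List.cons_append, derWord_cons, derWord_cons, ih, Function.comp_assoc]

theorem derWord_replicate (n : ℕ) (i : Δ) : derWord d (List.replicate n i) = (d i)^[n] := by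
  induction n with
  | zero => rfl
  | succ n ih => rw [List.replicate_succ, derWord_cons, ih, Function.iterate_succ']

/-- For `s = [i₁, …, iₖ]`, the ideal of those `x` with
`d_{i₁}^{a₁} ⋯ d_{iₖ}^{aₖ} x ∈ I` for all exponents `aⱼ`. -/
def wordCore (s : List Δ) (I : Ideal R) : Ideal R :=
  s.foldl (fun J i => (d i).coreIdeal J) I

variable {d}

theorem wordCore_append (s t : List Δ) (I : Ideal R) :
    wordCore d (s ++ t) I = wordCore d t (wordCore d s I) :=
  List.foldl_append ..

theorem wordCore_le (s : List Δ) (I : Ideal R) : wordCore d s I ≤ I := by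
  induction s generalizing I with
  | nil => exact le_rfl
  | cons i s ih => exact (ih _).trans (Derivation.coreIdeal_le I)

theorem wordCore_mono (s : List Δ) {I J : Ideal R} (h : I ≤ J) :
    wordCore d s I ≤ wordCore d s J := by
  induction s generalizing I J with
  | nil => exact h
  | cons i s ih => exact ih (Derivation.coreIdeal_mono h)

theorem isPrime_wordCore [Algebra ℚ R] (s : List Δ) {I : Ideal R} (hI : I.IsPrime) :
    (wordCore d s I).IsPrime := by
  induction s generalizing I with
  | nil => exact hI
  | cons i s ih => exact ih (Derivation.isPrime_coreIdeal hI)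

theorem derWord_mem_of_mem_wordCore {s : List Δ} {I : Ideal R} {x : R}
    (hx : x ∈ wordCore d s I) : derWord d s x ∈ I := by
  induction s generalizing I with
  | nil => exact hx
  | cons i s ih => exact Derivation.mem_coreIdeal.1 (ih hx) 1

theorem mem_wordCore_of_forall_derWord_mem {I : Ideal R} {x : R}
    (hx : ∀ l, derWord d l x ∈ I) (s : List Δ) : x ∈ wordCore d s I := by
  induction s generalizing I with
  | nil => exact hx []
  | cons i s ih =>
    refine ih fun l n => ?_
    rw [← derWord_replicate, ← Function.comp_apply (f := derWord d _), ← derWord_append]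
    exact hx _

theorem mem_iInf_wordCore {I : Ideal R} {x : R} :
    x ∈ ⨅ s, wordCore d s I ↔ ∀ l, derWord d l x ∈ I := by
  rw [Ideal.mem_iInf]
  exact ⟨fun hx l => derWord_mem_of_mem_wordCore (hx l), mem_wordCore_of_forall_derWord_mem⟩

theorem directed_wordCore (I : Ideal R) : Directed (· ≥ ·) fun s => wordCore d s I :=
  fun s t => ⟨s ++ t, (wordCore_append s t I).trans_le (wordCore_le t _),
    (wordCore_append s t I).trans_le (wordCore_mono t (wordCore_le s I))⟩

end Words

/-- Let `R` be a commutative `ℚ`-algebra equipped with a family `(d i)_{i ∈ Δ}` of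
derivations and let `𝔭` be a prime ideal of `R`. Then
`𝔭_# = {x | θ(x) ∈ 𝔭 for every word θ in the d i's}` is a prime ideal of `R`,
a `Δ`-ideal, and is contained in `𝔭`. -/
theorem stmt_8 {R Δ : Type*} [CommRing R] [Algebra ℚ R]
    (d : Δ → Derivation ℤ R R) (p : Ideal R) (hp : p.IsPrime) :
    ∃ q : Ideal R,
      (q : Set R) = {x : R | ∀ l : List Δ, derWord d l x ∈ p} ∧
      q.IsPrime ∧ (∀ i, ∀ x ∈ q, d i x ∈ q) ∧ q ≤ p := by
  refine ⟨⨅ s, wordCore d s p, Set.ext fun x => mem_iInf_wordCore,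
    Ideal.isPrime_iInf_of_directed (directed_wordCore p) fun s => isPrime_wordCore s hp,
    fun i x hx => mem_iInf_wordCore.2 fun l => ?_, fun x hx => mem_iInf_wordCore.1 hx []⟩
  have h := mem_iInf_wordCore.1 hx (l ++ [i])
  rwa [derWord_append] at h
end

section
/- Let K be a commutative ring equipped with a family (d_i)_{i ∈ Δ} of derivations, and assume K is simple (its only Δ-ideals are (0) and K). Let C = {λ ∈ K : d_i λ = 0 for all i} be its ring of constants, and assume C is a field (this is automatic from simplicity). Let A be a commutative C-algebra, and equip A ⊗_C K with the family of derivations (D_i)_{i ∈ Δ} characterized by D_i(a ⊗ λ) = a ⊗ d_i(λ). Let i : A → A ⊗_C K, a ↦ a ⊗ 1. Then: (1) for every ideal I of A, the ideal of A ⊗_C K generated by i(I) is a Δ-ideal and i⁻¹(⟨i(I)⟩) = I; (2) for every Δ-ideal J of A ⊗_C K, the ideal generated by i(i⁻¹(J)) equals J. In other words, I ↦ ⟨i(I)⟩ and J ↦ i⁻¹(J) are mutually inverse bijections between the set of ideals of A and the set of Δ-ideals of A ⊗_C K. -/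
/-! Let `J` be a `Δ`-ideal and `I = i⁻¹(J)`. Taking coordinates in a `C`-basis of `A/I`, the image
of `J` in `(A/I) ⊗_C K` becomes a `K`-submodule `M` of `ι →₀ K` stable under the coordinatewise
`d i`, and the only vector of `M` with constant coordinates is `0`, since such a vector comes from
some `ā ⊗ 1` with `a ⊗ 1 ∈ J`. If `M ≠ 0`, take `f ∈ M` of minimal support and `j` in its support:
the `j`-th coordinates of the elements of `M` supported in `supp f` form a nonzero `Δ`-ideal of `K`,
hence contain `1`, and the corresponding `g ∈ M` has all `d i g` of smaller support, hence zero;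
so `g ≠ 0` has constant coordinates, a contradiction. Thus `M = 0`, which by right exactness of
`⊗_C K` says `J ⊆ ⟨i(I)⟩`. The equality `i⁻¹⟨i(I)⟩ = I` is faithful flatness of `A ⊗_C K`
over `A`, and `⟨i(I)⟩` is a `Δ`-ideal because its generators `a ⊗ 1` are killed by every `D i`. -/

open scoped TensorProduct

set_option synthInstance.maxHeartbeats 1000000
set_option maxHeartbeats 1000000

/-- The subring of constants of a commutative ring equipped with a family of
derivations. -/
def constants {K Δ : Type*} [CommRing K] (d : Δ → Derivation ℤ K K) : Subring K where
  carrier := {x : K | ∀ i, d i x = 0}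
  zero_mem' := fun i => map_zero (d i)
  one_mem' := fun i => (d i).map_one_eq_zero
  add_mem' := fun ha hb i => by rw [map_add, ha i, hb i, add_zero]
  neg_mem' := fun ha i => by rw [map_neg, ha i, neg_zero]
  mul_mem' := fun {a b} ha hb i => by
    rw [(d i).leibniz, ha i, hb i, smul_zero, smul_zero, add_zero]

/-- The canonical map `i : A → A ⊗_C K`, `a ↦ a ⊗ 1`. -/
noncomputable def inclLeft (C : Type*) [CommRing C] (A K : Type*) [CommRing A]
    [CommRing K] [Algebra C A] [Algebra C K] : A →+* A ⊗[C] K :=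
  Algebra.TensorProduct.includeLeftRingHom

theorem Derivation.map_mem_span {R A : Type*} [CommSemiring R] [CommRing A] [Algebra R A]
    (D : Derivation R A A) {S : Set A} (hS : ∀ s ∈ S, D s ∈ Ideal.span S) {x : A}
    (hx : x ∈ Ideal.span S) : D x ∈ Ideal.span S := by
  induction hx using Submodule.span_induction with
  | mem s hs => exact hS s hs
  | zero => simp
  | add x y _ _ hx hy => simpa using Ideal.add_mem _ hx hy
  | smul r x hx' hx =>
    rw [smul_eq_mul, Derivation.leibniz, smul_eq_mul, smul_eq_mul]
    exact Ideal.add_mem _ (Ideal.mul_mem_left _ _ hx) (Ideal.mul_mem_right _ _ hx')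

theorem Submodule.eq_bot_of_mapRange_derivation_mem {K Δ ι : Type*} [CommRing K]
    (d : Δ → Derivation ℤ K K)
    (hsimple : ∀ I : Ideal K, (∀ i, ∀ x ∈ I, d i x ∈ I) → I = ⊥ ∨ I = ⊤)
    (M : Submodule K (ι →₀ K)) (hM : ∀ i, ∀ f ∈ M, f.mapRange (d i) (map_zero _) ∈ M)
    (hconst : ∀ f ∈ M, (∀ i, f.mapRange (d i) (map_zero _) = 0) → f = 0) : M = ⊥ := by
  classical
  rw [Submodule.eq_bot_iff]
  intro f hfM
  induction hn : f.support.card using Nat.strong_induction_on generalizing f with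
  | _ n IH =>
  by_contra hf
  obtain ⟨j, hj⟩ := Finsupp.support_nonempty_iff.2 hf
  let T : Ideal K := (M ⊓ Finsupp.supported K K ↑f.support).map (Finsupp.lapply j)
  have hT : (1 : K) ∈ T := by
    rw [(hsimple T ?_).resolve_left ?_]
    · trivial
    · rintro i _ ⟨g, ⟨hgM, hg⟩, rfl⟩
      exact ⟨_, ⟨hM i g hgM, Finsupp.support_mapRange.trans hg⟩, rfl⟩
    · exact (Submodule.ne_bot_iff T).2
        ⟨f j, ⟨f, ⟨hfM, Finsupp.mem_supported_support K f⟩, rfl⟩, Finsupp.mem_support_iff.1 hj⟩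
  obtain ⟨g, ⟨hgM, hg⟩, hgj : g j = 1⟩ := hT
  have hg0 : g ≠ 0 := fun h => Finsupp.mem_support_iff.1 hj <| by
    rw [← mul_one (f j), ← hgj, h, Finsupp.coe_zero, Pi.zero_apply, mul_zero]
  refine hg0 (hconst g hgM fun i => IH _ ?_ _ (hM i g hgM) rfl)
  -- `d i g` vanishes at `j` because `g j = 1`
  calc _ ≤ (f.support.erase j).card := Finset.card_le_card fun k hk => Finset.mem_erase.2
          ⟨by rintro rfl; simp [hgj] at hk, hg (Finsupp.support_mapRange hk)⟩
    _ < n := hn ▸ Finset.card_erase_lt_of_mem hj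

section Coordinates

variable {C A K : Type*} [Field C] [CommRing A] [CommRing K] [Algebra C A] [Algebra C K]

section Basis

variable {ι : Type*} [DecidableEq ι] (I : Ideal A) (b : Module.Basis ι C (A ⧸ I))

noncomputable def Ideal.quotientTensorCoord : A ⊗[C] K →ₗ[C] ι →₀ K :=
  (TensorProduct.equivFinsuppOfBasisLeft b).toLinearMap ∘ₗ
    (Algebra.TensorProduct.map (Ideal.Quotient.mkₐ C I) (AlgHom.id C K)).toLinearMap

theorem Ideal.quotientTensorCoord_tmul (a : A) (x : K) (j : ι) :
    I.quotientTensorCoord b (a ⊗ₜ x) j = b.repr (Ideal.Quotient.mk I a) j • x := by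
  simp [Ideal.quotientTensorCoord]

theorem Ideal.quotientTensorCoord_tmul_one (a : A) :
    I.quotientTensorCoord b (a ⊗ₜ (1 : K)) =
      (b.repr (Ideal.Quotient.mk I a)).mapRange (algebraMap C K) (map_zero _) := by
  ext j
  simp [Ideal.quotientTensorCoord_tmul, Algebra.smul_def]

theorem Ideal.quotientTensorCoord_eq_zero_iff (z : A ⊗[C] K) :
    I.quotientTensorCoord b z = 0 ↔ z ∈ I.map (inclLeft C A K) := by
  have hker := Algebra.TensorProduct.rTensor_ker (R := C) (C := K) _
    (Ideal.Quotient.mkₐ_surjective C I)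
  rw [show RingHom.ker (Ideal.Quotient.mkₐ C I) = I from Ideal.Quotient.mkₐ_ker C I] at hker
  change _ ↔ z ∈ I.map (Algebra.TensorProduct.includeLeft : A →ₐ[C] A ⊗[C] K)
  rw [← hker, RingHom.mem_ker, Ideal.quotientTensorCoord, LinearMap.comp_apply,
    LinearEquiv.coe_coe, LinearEquiv.map_eq_zero_iff]
  rfl

theorem Ideal.quotientTensorCoord_tmul_mul (μ : K) (z : A ⊗[C] K) :
    I.quotientTensorCoord b ((1 ⊗ₜ μ) * z) = μ • I.quotientTensorCoord b z := by
  induction z using TensorProduct.induction_on with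
  | zero => simp
  | tmul a x =>
    ext j
    simp [Ideal.quotientTensorCoord_tmul]
  | add u v hu hv => rw [mul_add, map_add, map_add, hu, hv, smul_add]

theorem Ideal.quotientTensorCoord_derivation (d : Derivation ℤ K K)
    (hd : ∀ c : C, d (algebraMap C K c) = 0) (D : Derivation ℤ (A ⊗[C] K) (A ⊗[C] K))
    (hD : ∀ (a : A) (x : K), D (a ⊗ₜ x) = a ⊗ₜ d x) (z : A ⊗[C] K) :
    I.quotientTensorCoord b (D z) = (I.quotientTensorCoord b z).mapRange d (map_zero _) := by
  induction z using TensorProduct.induction_on with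
  | zero => simp
  | tmul a x =>
    ext j
    simp [hD, Ideal.quotientTensorCoord_tmul, Algebra.smul_def, hd]
  | add u v hu hv => rw [map_add, map_add, hu, hv, map_add, Finsupp.mapRange_add (map_add d)]

end Basis

theorem Ideal.quotientTensorCoord_comap_eq_zero_of_mem_range {ι : Type*} [DecidableEq ι]
    {J : Ideal (A ⊗[C] K)}
    (b : Module.Basis ι C (A ⧸ J.comap (inclLeft C A K))) {z : A ⊗[C] K} (hz : z ∈ J)
    (hc : (J.comap (inclLeft C A K)).quotientTensorCoord b z ∈
      Set.range (Finsupp.mapRange (algebraMap C K) (map_zero _))) :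
    (J.comap (inclLeft C A K)).quotientTensorCoord b z = 0 := by
  obtain ⟨c, hc⟩ := hc
  obtain ⟨a, ha⟩ := Ideal.Quotient.mk_surjective (b.repr.symm c)
  have hca : c = b.repr (Ideal.Quotient.mk _ a) := by rw [ha, LinearEquiv.apply_symm_apply]
  have haJ : a ⊗ₜ 1 ∈ J := by
    have hdiff : z - a ⊗ₜ 1 ∈ J := Ideal.map_comap_le <|
      (Ideal.quotientTensorCoord_eq_zero_iff _ b _).1 <| by
        rw [map_sub, ← hc, hca, Ideal.quotientTensorCoord_tmul_one, sub_self]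
    simpa using J.sub_mem hz hdiff
  rw [← hc, hca, Ideal.Quotient.eq_zero_iff_mem.2 (show a ∈ J.comap (inclLeft C A K) from haJ),
    map_zero, Finsupp.mapRange_zero]

theorem Ideal.map_comap_inclLeft_of_derivation_stable {Δ : Type*} (d : Δ → Derivation ℤ K K)
    (hsimple : ∀ I : Ideal K, (∀ i, ∀ x ∈ I, d i x ∈ I) → I = ⊥ ∨ I = ⊤)
    (hconst : (algebraMap C K).range = constants d)
    (D : Δ → Derivation ℤ (A ⊗[C] K) (A ⊗[C] K))
    (hD : ∀ i (a : A) (x : K), D i (a ⊗ₜ x) = a ⊗ₜ d i x)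
    (J : Ideal (A ⊗[C] K)) (hJ : ∀ i, ∀ z ∈ J, D i z ∈ J) :
    (J.comap (inclLeft C A K)).map (inclLeft C A K) = J := by
  classical
  set I := J.comap (inclLeft C A K)
  let b := Module.Basis.ofVectorSpace C (A ⧸ I)
  let Φ := I.quotientTensorCoord (K := K) b
  have hd (i : Δ) (c : C) : d i (algebraMap C K c) = 0 :=
    (hconst ▸ RingHom.mem_range_self _ c : algebraMap C K c ∈ constants d) i
  let M : Submodule K (_ →₀ K) :=
    { carrier := Φ '' J
      add_mem' := by
        rintro _ _ ⟨y, hy, rfl⟩ ⟨z, hz, rfl⟩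
        exact ⟨y + z, J.add_mem hy hz, map_add Φ y z⟩
      zero_mem' := ⟨0, J.zero_mem, map_zero Φ⟩
      smul_mem' := by
        rintro μ _ ⟨z, hz, rfl⟩
        exact ⟨(1 ⊗ₜ μ) * z, J.mul_mem_left _ hz, I.quotientTensorCoord_tmul_mul b μ z⟩ }
  have hM : M = ⊥ := by
    refine Submodule.eq_bot_of_mapRange_derivation_mem d hsimple M ?_ ?_
    · rintro i _ ⟨z, hz, rfl⟩
      exact ⟨D i z, hJ i z hz, I.quotientTensorCoord_derivation b (d i) (hd i) (D i) (hD i) z⟩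
    · rintro _ ⟨z, hz, rfl⟩ hzc
      refine Ideal.quotientTensorCoord_comap_eq_zero_of_mem_range b hz ?_
      rw [Finsupp.range_mapRange]
      intro j
      have hj : Φ z j ∈ constants d := fun i => by simpa using DFunLike.congr_fun (hzc i) j
      rwa [← hconst] at hj
  refine le_antisymm Ideal.map_comap_le fun z hz => ?_
  rw [← I.quotientTensorCoord_eq_zero_iff b]
  exact (Submodule.mem_bot K).1 (hM ▸ ⟨z, hz, rfl⟩)

end Coordinates

/-- Let `K` be a simple `Δ`-ring with field of constants `C`, let `A` be a commutative
`C`-algebra, and equip `A ⊗_C K` with the derivations `D i` characterized by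
`D i (a ⊗ λ) = a ⊗ d i λ`. Then `I ↦ ⟨i(I)⟩` and `J ↦ i⁻¹(J)` are mutually inverse
bijections between the ideals of `A` and the `Δ`-ideals of `A ⊗_C K`: for every ideal
`I` of `A`, the ideal generated by `i(I)` is a `Δ`-ideal whose contraction is `I`; and
every `Δ`-ideal `J` of `A ⊗_C K` is generated by `i(i⁻¹(J))`. -/
theorem stmt_10 {K Δ : Type*} [CommRing K] (d : Δ → Derivation ℤ K K)
    (hsimple : ∀ I : Ideal K, (∀ i, ∀ x ∈ I, d i x ∈ I) → I = ⊥ ∨ I = ⊤)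
    (hC : IsField (constants d))
    (A : Type*) [CommRing A] [Algebra (constants d) A]
    (D : Δ → Derivation ℤ (A ⊗[constants d] K) (A ⊗[constants d] K))
    (hD : ∀ i (a : A) (c : K), D i (a ⊗ₜ c) = a ⊗ₜ[constants d] (d i c)) :
    (∀ I : Ideal A,
      (∀ i, ∀ x ∈ I.map (inclLeft (constants d) A K), D i x ∈ I.map (inclLeft (constants d) A K)) ∧
      (I.map (inclLeft (constants d) A K)).comap (inclLeft (constants d) A K) = I) ∧
    (∀ J : Ideal (A ⊗[constants d] K), (∀ i, ∀ x ∈ J, D i x ∈ J) →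
      (J.comap (inclLeft (constants d) A K)).map (inclLeft (constants d) A K) = J) := by
  let : Field (constants d) := hC.toField
  have : Nontrivial K := (Subtype.val_injective (p := (· ∈ constants d))).nontrivial
  have hconst : (algebraMap (constants d) K).range = constants d := Subring.range_subtype _
  refine ⟨fun I => ⟨fun i x hx => ?_, Ideal.comap_map_eq_self_of_faithfullyFlat I⟩,
    Ideal.map_comap_inclLeft_of_derivation_stable d hsimple hconst D hD⟩
  refine (D i).map_mem_span ?_ hx
  rintro _ ⟨a, -, rfl⟩
  have h0 : D i (inclLeft (constants d) A K a) = 0 := by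
    rw [inclLeft, Algebra.TensorProduct.includeLeftRingHom_apply, hD,
      (d i).map_one_eq_zero, TensorProduct.tmul_zero]
  exact h0 ▸ zero_mem _
end

section
/- Let K be a commutative ring that is a ℚ-algebra, equipped with a family (d_i)_{i ∈ Δ} of derivations, and assume K is simple (its only Δ-ideals are (0) and K). Let C = {λ ∈ K : d_i λ = 0 for all i} be its field of constants (a field by simplicity; assume it is a field), and assume there exists a C-algebra homomorphism φ : K → C. Let A be a commutative C-algebra, equip A ⊗_C K with the derivations (D_i) characterized by D_i(a ⊗ λ) = a ⊗ d_i(λ), and let i : A → A ⊗_C K, a ↦ a ⊗ 1. Then for every prime ideal 𝔭 of A, the ideal of A ⊗_C K generated by i(𝔭) is a prime ideal and a Δ-ideal. -/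
open scoped TensorProduct

set_option synthInstance.maxHeartbeats 1000000
set_option maxHeartbeats 1000000

section DifferentialRing

variable {k R Δ : Type*} [CommRing k] [CommRing R] [Algebra k R]

def Ideal.IsDifferential (I : Ideal R) (d : Δ → Derivation k R R) : Prop :=
  ∀ i, ∀ x ∈ I, d i x ∈ I

def IsDifferentiallySimple (d : Δ → Derivation k R R) : Prop :=
  ∀ I : Ideal R, I.IsDifferential d → I = ⊥ ∨ I = ⊤

theorem Ideal.isDifferential_map_of_map_eq_zero {A : Type*} [CommRing A]
    (d : Δ → Derivation k R R) (f : A →+* R) (hf : ∀ i a, d i (f a) = 0) (p : Ideal A) :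
    (p.map f).IsDifferential d := by
  intro i x hx
  induction hx using Submodule.span_induction with
  | mem x hx =>
    obtain ⟨a, -, rfl⟩ := hx
    rw [hf]
    exact zero_mem _
  | zero => simp
  | add x y _ _ hx hy => simpa using add_mem hx hy
  | smul r x hxI hx =>
    rw [smul_eq_mul, Derivation.leibniz]
    exact add_mem (Ideal.mul_mem_left _ _ hx) (Ideal.mul_mem_right _ _ hxI)

namespace Derivation

variable (δ : Derivation k R R)

theorem apply_mul_eq_zero_of_mul_eq_zero [IsReduced R] {a z : R} (h : z * a = 0) :
    δ z * a = 0 := by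
  have h2 : δ z * a * a = 0 := by
    have := congrArg (fun y => a * δ y) h
    simp only [leibniz, smul_eq_mul, map_zero, mul_zero] at this
    linear_combination this - δ a * h
  exact IsReduced.eq_zero _ ⟨2, by linear_combination δ z * h2⟩

variable [IsAddTorsionFree R]

theorem pow_mul_pow_eq_zero_of_pow_eq_zero {x : R} {n : ℕ} (hx : x ^ (n + 1) = 0) :
    ∀ j m, j + m = n → x ^ m * δ x ^ (2 * j + 1) = 0 := by
  intro j
  induction j with
  | zero =>
    rintro m rfl
    have h : (m + 1) • (x ^ m * δ x) = 0 := by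
      simpa [leibniz_pow, mul_comm] using congrArg δ hx
    simpa using (smul_eq_zero.mp h).resolve_left m.succ_ne_zero
  | succ j ih =>
    intro m hm
    have h := ih (m + 1) (by omega)
    -- differentiate `x ^ (m + 1) * u ^ (2j + 1) = 0`, `u = δ x`, and multiply by `u`
    have key : (m + 1) • (x ^ m * δ x ^ (2 * (j + 1) + 1)) =
        δ (x ^ (m + 1) * δ x ^ (2 * j + 1)) * δ x
          - (2 * j + 1) • (x ^ (m + 1) * δ x ^ (2 * j + 1) * δ (δ x)) := by
      rw [leibniz, leibniz_pow, leibniz_pow]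
      simp only [smul_eq_mul, Nat.add_sub_cancel]
      ring
    rw [h, map_zero, zero_mul, zero_mul, smul_zero, sub_zero] at key
    exact (smul_eq_zero.mp key).resolve_left m.succ_ne_zero

theorem isNilpotent_apply {x : R} (hx : IsNilpotent x) : IsNilpotent (δ x) := by
  obtain ⟨n, hn⟩ := hx
  have h := δ.pow_mul_pow_eq_zero_of_pow_eq_zero (by rw [pow_succ, hn, zero_mul]) n 0 rfl
  exact ⟨2 * n + 1, by simpa using h⟩

end Derivation

variable [Nontrivial R] {d : Δ → Derivation k R R}

theorem IsDifferentiallySimple.isReduced [IsAddTorsionFree R] (hd : IsDifferentiallySimple d) :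
    IsReduced R := by
  have hnil : (nilradical R).IsDifferential d := fun i x hx =>
    (d i).isNilpotent_apply hx
  refine (hd _ hnil).elim (fun h => ⟨fun x hx => ?_⟩) fun h => ?_
  · simpa [h] using (mem_nilradical.mpr hx : x ∈ nilradical R)
  · exact absurd (h ▸ Submodule.mem_top : (1 : R) ∈ nilradical R) fun h1 =>
      not_isNilpotent_one (mem_nilradical.mp h1)

theorem IsDifferentiallySimple.isDomain [IsAddTorsionFree R] (hd : IsDifferentiallySimple d) :
    IsDomain R := by
  have := hd.isReduced
  suffices NoZeroDivisors R from NoZeroDivisors.to_isDomain R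
  refine ⟨fun {a b} hab => or_iff_not_imp_left.mpr fun ha => ?_⟩
  have hann : (R ∙ a).annihilator.IsDifferential d := fun i z hz => by
    rw [Submodule.mem_annihilator_span_singleton] at hz ⊢
    exact (d i).apply_mul_eq_zero_of_mul_eq_zero hz
  have hb : b ∈ (R ∙ a).annihilator := by
    rwa [Submodule.mem_annihilator_span_singleton, smul_eq_mul, mul_comm]
  rcases hd _ hann with h | h
  · simpa [h] using hb
  · have h1 : (1 : R) ∈ (R ∙ a).annihilator := h ▸ Submodule.mem_top
    simp [ha] at h1

end DifferentialRing

section Coefficients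

variable {k K ι Δ : Type*} [CommRing k] [CommRing K] [Nontrivial K] [Algebra k K]
  {d : Δ → Derivation k K K}

theorem IsDifferentiallySimple.exists_ne_zero_forall_derivation_eq_zero
    (hd : IsDifferentiallySimple d) (M : Submodule K (ι →₀ K))
    (hM : ∀ i, ∀ v ∈ M, v.mapRange (d i) (map_zero _) ∈ M) (hM0 : M ≠ ⊥) :
    ∃ v ∈ M, v ≠ 0 ∧ ∀ i j, d i (v j) = 0 := by
  classical
  obtain ⟨x, ⟨hxM, hx0⟩, hmin⟩ := (measure fun v : ι →₀ K => v.support.card).wf.has_min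
    {v | v ∈ M ∧ v ≠ 0} ((Submodule.ne_bot_iff M).mp hM0)
  obtain ⟨j₀, hj₀⟩ := Finsupp.support_nonempty_iff.mpr hx0
  set I : Ideal K := (M ⊓ Finsupp.supported K K ↑x.support).map (Finsupp.lapply j₀)
  have hI : I.IsDifferential d := by
    rintro i _ ⟨v, ⟨hvM, hvx⟩, rfl⟩
    refine ⟨v.mapRange (d i) (map_zero _), ⟨hM i v hvM, ?_⟩, by simp⟩
    exact (Finsupp.mem_supported _ _).mpr (Finsupp.support_mapRange.trans
      ((Finsupp.mem_supported _ _).mp hvx))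
  have hI0 : I ≠ ⊥ := fun h => by
    have : x j₀ ∈ I := ⟨x, ⟨hxM, (Finsupp.mem_supported _ _).mpr subset_rfl⟩, rfl⟩
    exact Finsupp.mem_support_iff.mp hj₀ (by simpa [h] using this)
  obtain ⟨y, ⟨hyM, hyx⟩, hy1⟩ : (1 : K) ∈ I :=
    (hd I hI).resolve_left hI0 ▸ Submodule.mem_top
  replace hy1 : y j₀ = 1 := hy1
  refine ⟨y, hyM, fun h => by simp [h] at hy1, fun i j => ?_⟩
  -- `d i` applied to `y` loses the coefficient at `j₀`, so minimality of `x` forces it to vanish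
  by_contra hne
  refine hmin (y.mapRange (d i) (map_zero _)) ⟨hM i y hyM, fun h => hne ?_⟩ ?_
  · simpa using congrArg (· j) h
  · calc (y.mapRange (d i) (map_zero _)).support.card
        ≤ (x.support.erase j₀).card := by
          refine Finset.card_le_card fun j hj => Finset.mem_erase.mpr ⟨?_, ?_⟩
          · rintro rfl
            simp [hy1] at hj
          · exact (Finsupp.mem_supported _ _).mp hyx (Finsupp.support_mapRange hj)
      _ < x.support.card := Finset.card_erase_lt_of_mem hj₀

end Coefficients

section TensorProduct

variable {F K : Type*} [CommRing F] [CommRing K] [Algebra F K]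

def Derivation.rTensor (δ : Derivation F K K) (L : Type*) [CommRing L] [Algebra F L] :
    Derivation F (K ⊗[F] L) (K ⊗[F] L) :=
  Derivation.mk' (LinearMap.rTensor L δ.toLinearMap) fun x y => by
    induction x with
    | zero => simp
    | add x x' hx hx' => simp only [add_mul, map_add, hx, hx', add_smul, smul_add]; abel
    | tmul a l =>
      induction y with
      | zero => simp
      | add y y' hy hy' => simp only [mul_add, map_add, hy, hy', smul_add, add_smul]; abel
      | tmul b m =>
        simp [Derivation.leibniz, TensorProduct.add_tmul, mul_comm]

@[simp]
theorem Derivation.rTensor_tmul (δ : Derivation F K K) (L : Type*) [CommRing L] [Algebra F L]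
    (a : K) (l : L) : δ.rTensor L (a ⊗ₜ l) = δ a ⊗ₜ l :=
  rfl

namespace Algebra.TensorProduct

variable {L ι : Type*} [CommRing L] [Algebra F L] (b : Module.Basis ι F L)

theorem basis_repr_rTensor (δ : Derivation F K K) (y : K ⊗[F] L) :
    (basis K b).repr (δ.rTensor L y) = ((basis K b).repr y).mapRange δ (map_zero _) := by
  induction y with
  | zero => simp
  | add y y' hy hy' => ext; simp [hy, hy']
  | tmul a l => ext; simp [Derivation.leibniz, mul_comm]

theorem exists_eq_one_tmul_of_basis_repr_mem_range (y : K ⊗[F] L)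
    (hy : ∀ j, (basis K b).repr y j ∈ (algebraMap F K).range) : ∃ l : L, y = 1 ⊗ₜ l := by
  choose c hc using hy
  refine ⟨∑ j ∈ ((basis K b).repr y).support, c j • b j, ?_⟩
  conv_lhs => rw [← (basis K b).linearCombination_repr y]
  simp only [Finsupp.linearCombination_apply, Finsupp.sum, basis_apply, TensorProduct.tmul_sum]
  refine Finset.sum_congr rfl fun j _ => ?_
  rw [← hc, TensorProduct.smul_tmul', smul_eq_mul, mul_one, Algebra.algebraMap_eq_smul_one,
    TensorProduct.smul_tmul]

end Algebra.TensorProduct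

end TensorProduct

section BaseChangeOfSimple

open Algebra.TensorProduct

variable {F K Δ : Type*} [Field F] [CommRing K] [Nontrivial K] [Algebra F K]
  {d : Δ → Derivation F K K}

theorem IsDifferentiallySimple.rTensor (hd : IsDifferentiallySimple d)
    (hconst : ∀ x, (∀ i, d i x = 0) → x ∈ (algebraMap F K).range) (L : Type*) [Field L]
    [Algebra F L] : IsDifferentiallySimple fun i => (d i).rTensor L := by
  intro J hJ
  refine or_iff_not_imp_left.mpr fun hJ0 => ?_
  let b := Module.Basis.ofVectorSpace F L
  let M : Submodule K (_ →₀ K) := (J.restrictScalars K).map (basis K b).repr.toLinearMap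
  have hM : ∀ i, ∀ v ∈ M, v.mapRange (d i) (map_zero _) ∈ M := by
    rintro i _ ⟨y, hy, rfl⟩
    exact ⟨_, hJ i y hy, basis_repr_rTensor b (d i) y⟩
  have hM0 : M ≠ ⊥ := by
    simpa [M, Submodule.map_eq_bot_iff, LinearEquiv.ker] using hJ0
  obtain ⟨_, ⟨y, hyJ, rfl⟩, hy0, hyc⟩ := hd.exists_ne_zero_forall_derivation_eq_zero M hM hM0
  obtain ⟨l, rfl⟩ := exists_eq_one_tmul_of_basis_repr_mem_range b y fun j => hconst _ (hyc · j)
  have hl : l ≠ 0 := by rintro rfl; simp at hy0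
  exact J.eq_top_of_isUnit_mem hyJ (hl.isUnit.map (includeRight : L →ₐ[F] K ⊗[F] L))

variable [CharZero F]

theorem IsDifferentiallySimple.isDomain_tensorProduct (hd : IsDifferentiallySimple d)
    (hconst : ∀ x, (∀ i, d i x = 0) → x ∈ (algebraMap F K).range) (R : Type*) [CommRing R]
    [IsDomain R] [Algebra F R] : IsDomain (R ⊗[F] K) := by
  have : Nontrivial (K ⊗[F] FractionRing R) :=
    nontrivial_of_algebraMap_injective_of_flat_right F K _ (algebraMap F K).injective
  have : IsAddTorsionFree (K ⊗[F] FractionRing R) := .of_isTorsionFree F _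
  have : IsDomain (K ⊗[F] FractionRing R) := (hd.rTensor hconst _).isDomain
  let e := Algebra.TensorProduct.comm F R K
  let f := (map (AlgHom.id F K) (IsScalarTower.toAlgHom F R (FractionRing R))).comp e.toAlgHom
  exact Function.Injective.isDomain f.toRingHom <|
    (Module.Flat.lTensor_preserves_injective_linearMap _
      (IsFractionRing.injective R (FractionRing R))).comp e.injective

end BaseChangeOfSimple

def constantsDerivation {K Δ : Type*} [CommRing K] (d : Δ → Derivation ℤ K K) (i : Δ) :
    Derivation (constants d) K K where
  toFun := d i
  map_add' := map_add (d i)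
  map_smul' c x := by simp [Subring.smul_def, Derivation.leibniz, c.2 i]
  map_one_eq_zero' := (d i).map_one_eq_zero
  leibniz' := (d i).leibniz

theorem stmt_12_general {K Δ : Type*} [CommRing K] [Algebra ℚ K]
    (d : Δ → Derivation ℤ K K)
    (hsimple : ∀ I : Ideal K, (∀ i, ∀ x ∈ I, d i x ∈ I) → I = ⊥ ∨ I = ⊤)
    (hC : IsField (constants d))
    (A : Type*) [CommRing A] [Algebra (constants d) A]
    (D : Δ → Derivation ℤ (A ⊗[constants d] K) (A ⊗[constants d] K))
    (hD : ∀ i (a : A) (c : K), D i (a ⊗ₜ c) = a ⊗ₜ[constants d] (d i c)) :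
    ∀ p : Ideal A, p.IsPrime →
      (p.map (inclLeft (constants d) A K)).IsPrime ∧
      (∀ i, ∀ x ∈ p.map (inclLeft (constants d) A K),
        D i x ∈ p.map (inclLeft (constants d) A K)) := by
  intro p hp
  let : Field (constants d) := hC.toField
  have : Nontrivial K := (Subtype.val_injective (p := (· ∈ constants d))).nontrivial
  have : CharZero K := charZero_of_injective_algebraMap (algebraMap ℚ K).injective
  have hδ : IsDifferentiallySimple (constantsDerivation d) := hsimple
  refine ⟨?_, Ideal.isDifferential_map_of_map_eq_zero D _ (fun i a => ?_) p⟩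
  · have := hδ.isDomain_tensorProduct (fun x hx => ⟨⟨x, hx⟩, rfl⟩) (A ⧸ p)
    have hker : p.map (inclLeft (constants d) A K) = RingHom.ker
        (Algebra.TensorProduct.map (Ideal.Quotient.mkₐ (constants d) p) (AlgHom.id _ K)) := by
      rw [Algebra.TensorProduct.rTensor_ker _ Ideal.Quotient.mk_surjective,
        ← RingHom.ker_coe_toRingHom, Ideal.Quotient.mkₐ_ker]
      rfl
    exact hker ▸ RingHom.ker_isPrime _
  · change D i (a ⊗ₜ 1) = 0
    rw [hD, (d i).map_one_eq_zero, TensorProduct.tmul_zero]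

/-- Let `K` be a simple `Δ`-ring which is a `ℚ`-algebra, with field of constants `C`,
admitting a `C`-algebra homomorphism `φ : K → C`. Let `A` be a commutative `C`-algebra
and equip `A ⊗_C K` with the derivations `D i` characterized by
`D i (a ⊗ λ) = a ⊗ d i λ`. Then for every prime ideal `𝔭` of `A`, the ideal of
`A ⊗_C K` generated by `i(𝔭)` is a prime ideal and a `Δ`-ideal. -/
theorem stmt_12 {K Δ : Type*} [CommRing K] [Algebra ℚ K]
    (d : Δ → Derivation ℤ K K)
    (hsimple : ∀ I : Ideal K, (∀ i, ∀ x ∈ I, d i x ∈ I) → I = ⊥ ∨ I = ⊤)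
    (hC : IsField (constants d))
    (hφ : ∃ φ : K →+* constants d, ∀ c : constants d, φ ↑c = c)
    (A : Type*) [CommRing A] [Algebra (constants d) A]
    (D : Δ → Derivation ℤ (A ⊗[constants d] K) (A ⊗[constants d] K))
    (hD : ∀ i (a : A) (c : K), D i (a ⊗ₜ c) = a ⊗ₜ[constants d] (d i c)) :
    ∀ p : Ideal A, p.IsPrime →
      (p.map (inclLeft (constants d) A K)).IsPrime ∧
      (∀ i, ∀ x ∈ p.map (inclLeft (constants d) A K),
        D i x ∈ p.map (inclLeft (constants d) A K)) :=
  stmt_12_general d hsimple hC A D hD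
end

section
/- Let R be a nontrivial reduced commutative ring (0 ≠ 1, no nonzero nilpotents) equipped with a family (d_i)_{i ∈ Δ} of derivations, and assume R is simple (its only Δ-ideals are (0) and R). Then R has no zero divisors: for x, y ∈ R, x·y = 0 implies x = 0 or y = 0. -/
/-- A nontrivial reduced simple `Δ`-ring has no zero divisors. -/
theorem stmt_14 {R Δ : Type*} [CommRing R] [Nontrivial R] [IsReduced R]
    (d : Δ → Derivation ℤ R R)
    (hsimple : ∀ I : Ideal R, (∀ i, ∀ x ∈ I, d i x ∈ I) → I = ⊥ ∨ I = ⊤) :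
    ∀ x y : R, x * y = 0 → x = 0 ∨ y = 0 := by
  intro x y hxy
  by_cases hy : y = 0
  · exact Or.inr hy
  left
  set I : Ideal R :=
    { carrier := {a | a * y = 0}
      add_mem' := fun {a b} ha hb => by
        simp only [Set.mem_setOf_eq] at *
        rw [add_mul, ha, hb, add_zero]
      zero_mem' := by simp
      smul_mem' := fun c a ha => by
        simp only [Set.mem_setOf_eq, smul_eq_mul] at *
        rw [mul_assoc, ha, mul_zero] } with hI
  have hmem : ∀ a : R, a ∈ I ↔ a * y = 0 := fun a => Iff.rfl
  have hder : ∀ i, ∀ a ∈ I, d i a ∈ I := by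
    intro i a ha
    rw [hmem] at ha ⊢
    have h1 : (d i) (a * y) = 0 := by rw [ha]; simp
    have h2 : a * d i y + d i a * y = 0 := by
      have := h1; rw [Derivation.leibniz] at this; simp only [smul_eq_mul] at this; linear_combination this
    have h3 : d i a * y * y = 0 := by
      have := congrArg (· * y) h2
      simp only [add_mul, zero_mul] at this
      calc d i a * y * y = a * d i y * y + d i a * y * y - (a * y) * d i y := by ring
        _ = 0 := by rw [this, ha]; ring
    have h4 : IsNilpotent (d i a * y) := by
      refine ⟨2, ?_⟩
      rw [pow_two]; calc d i a * y * (d i a * y) = d i a * (d i a * y * y) := by ring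
        _ = 0 := by rw [h3, mul_zero]
    exact IsNilpotent.eq_zero h4
  rcases hsimple I hder with h | h
  · have hx : x ∈ I := (hmem x).mpr hxy
    rw [h] at hx
    exact Ideal.mem_bot.mp hx
  · exact absurd (by simpa using (hmem 1).mp (h ▸ Submodule.mem_top)) hy
end

section
/- Let R be a commutative ring equipped with a family (d_i)_{i ∈ Δ} of derivations, and assume R is simple (its only Δ-ideals are (0) and R). Then for any two nonzero ideals I and J of R, one has I ∩ J ≠ 0. (Geometrically: the spectrum of a simple Δ-ring is irreducible.) -/
/-- Iterated application of the derivations along a word. -/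
def Dw {R Δ : Type*} [CommRing R] (d : Δ → Derivation ℤ R R) : List Δ → R → R
  | [], x => x
  | a :: w, x => d a (Dw d w x)

/-- In a simple `Δ`-ring, any two nonzero ideals have nonzero intersection
(the spectrum of a simple `Δ`-ring is irreducible). -/
theorem stmt_15 {R Δ : Type*} [CommRing R]
    (d : Δ → Derivation ℤ R R)
    (hsimple : ∀ I : Ideal R, (∀ i, ∀ x ∈ I, d i x ∈ I) → I = ⊥ ∨ I = ⊤) :
    ∀ I J : Ideal R, I ≠ ⊥ → J ≠ ⊥ → I ⊓ J ≠ ⊥ := by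
  intro I J hI hJ hbot
  -- Main lemma: all products of iterated derivatives vanish.
  have main : ∀ n (u v : List Δ), u.length + v.length = n →
      ∀ i ∈ I, ∀ j ∈ J, Dw d u i * Dw d v j = 0 := by
    intro n
    induction n using Nat.strong_induction_on with
    | _ n IH =>
      have memI : ∀ (u v : List Δ), u.length + v.length = n →
          ∀ i ∈ I, ∀ j ∈ J, Dw d u i * Dw d v j ∈ I := by
        intro u
        induction u with
        | nil =>
          intro v h i hi j hj
          exact I.mul_mem_right _ hi
        | cons a u' ih =>
          intro v h i hi j hj
          have h0 : Dw d u' i * Dw d v j = 0 :=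
            IH (u'.length + v.length) (by simp at h; omega) u' v rfl i hi j hj
          have leib := (d a).leibniz (Dw d u' i) (Dw d v j)
          rw [h0, map_zero, smul_eq_mul, smul_eq_mul] at leib
          have key : Dw d (a :: u') i * Dw d v j = -(Dw d u' i * Dw d (a :: v) j) := by
            show d a (Dw d u' i) * Dw d v j = -(Dw d u' i * d a (Dw d v j))
            linear_combination -leib
          rw [key]
          exact neg_mem (ih (a :: v) (by simp at h ⊢; omega) i hi j hj)
      have memJ : ∀ (v u : List Δ), u.length + v.length = n →
          ∀ i ∈ I, ∀ j ∈ J, Dw d u i * Dw d v j ∈ J := by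
        intro v
        induction v with
        | nil =>
          intro u h i hi j hj
          exact J.mul_mem_left _ hj
        | cons a v' ih =>
          intro u h i hi j hj
          have h0 : Dw d u i * Dw d v' j = 0 :=
            IH (u.length + v'.length) (by simp at h; omega) u v' rfl i hi j hj
          have leib := (d a).leibniz (Dw d u i) (Dw d v' j)
          rw [h0, map_zero, smul_eq_mul, smul_eq_mul] at leib
          have key : Dw d u i * Dw d (a :: v') j = -(Dw d (a :: u) i * Dw d v' j) := by
            show Dw d u i * d a (Dw d v' j) = -(d a (Dw d u i) * Dw d v' j)
            linear_combination -leib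
          rw [key]
          exact neg_mem (ih (a :: u) (by simp at h ⊢; omega) i hi j hj)
      intro u v h i hi j hj
      have hmem : Dw d u i * Dw d v j ∈ I ⊓ J :=
        ⟨memI u v h i hi j hj, memJ v u h i hi j hj⟩
      rw [hbot] at hmem
      simpa using hmem
  -- The Δ-closure of I.
  set C : Ideal R := Ideal.span {x | ∃ u : List Δ, ∃ i ∈ I, Dw d u i = x} with hC
  have hCd : ∀ a, ∀ x ∈ C, d a x ∈ C := by
    intro a x hx
    induction hx using Submodule.span_induction with
    | mem x hx =>
      obtain ⟨u, i, hi, rfl⟩ := hx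
      exact Ideal.subset_span ⟨a :: u, i, hi, rfl⟩
    | zero => simp
    | add x y _ _ hx hy => simpa using C.add_mem hx hy
    | smul r x hxs hx =>
      rw [smul_eq_mul, Derivation.leibniz, smul_eq_mul, smul_eq_mul]
      exact C.add_mem (Ideal.mul_mem_left _ _ hx) (Ideal.mul_mem_right _ _ hxs)
  have hIC : I ≤ C := fun i hi => Ideal.subset_span ⟨[], i, hi, rfl⟩
  have hCtop : C = ⊤ := by
    rcases hsimple C hCd with h | h
    · exact absurd (eq_bot_iff.mpr (hIC.trans h.le)) hI
    · exact h
  obtain ⟨j, hj, hj0⟩ := Submodule.ne_bot_iff J |>.mp hJ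
  have hmul : ∀ x ∈ C, x * j = 0 := by
    intro x hx
    induction hx using Submodule.span_induction with
    | mem x hx =>
      obtain ⟨u, i, hi, rfl⟩ := hx
      have := main u.length u [] (by simp) i hi j hj
      simpa [Dw] using this
    | zero => simp
    | add x y _ _ hx hy => rw [add_mul, hx, hy, add_zero]
    | smul r x _ hx => rw [smul_eq_mul, mul_assoc, hx, mul_zero]
  have : (1 : R) ∈ C := hCtop ▸ Submodule.mem_top
  have := hmul 1 this
  rw [one_mul] at this
  exact hj0 this
end

section
/- Let k be a field equipped with a family (∂_i)_{i ∈ Δ} of derivations, and let R be a commutative k-algebra that is finitely generated as a k-algebra and has no zero divisors, equipped with a family (D_i)_{i ∈ Δ} of derivations extending those of k (i.e. D_i(algebraMap c) = algebraMap(∂_i c) for all c ∈ k and all i). Assume R is simple (its only Δ-ideals are (0) and R). Then every constant f ∈ R (i.e. D_i f = 0 for all i) is algebraic over the constant subfield C(k) = {c ∈ k : ∂_i c = 0 for all i}: there exists a nonzero polynomial with coefficients in C(k) annihilating f. -/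
/-!
Since `R` is Δ-simple, the principal ideal of a nonzero constant is a nonzero Δ-ideal, so nonzero
constants are units. This forces `f` to be algebraic over `k`. In characteristic `p`, every `r ^ p`
is constant, so `R` is a field, hence finite over `k` by Zariski's lemma. In characteristic zero,
if `f` were transcendental then the constants `f - n`, `n ∈ ℕ`, would be infinitely many units of
the form `f - c`; but by Chevalley's theorem the image of `Spec R → Spec k[f]` is constructible and
contains the generic point, hence contains a nonempty basic open set, so `f - c` lies in a prime of
`R` for all but finitely many `c`.

Finally, applying a derivation to the minimal polynomial of the constant `f` gives a polynomial of
smaller degree (the polynomial is monic) vanishing at `f`, which must be zero: the coefficients of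
the minimal polynomial are constants.
-/

open Polynomial Topology Differential

theorem PrimeSpectrum.exists_basicOpen_subset_of_isConstructible {A : Type*} [CommRing A]
    [IsDomain A] {s : Set (PrimeSpectrum A)} (hs : IsConstructible s) (hbot : ⊥ ∈ s) :
    ∃ a : A, a ≠ 0 ∧ (basicOpen a : Set (PrimeSpectrum A)) ⊆ s := by
  obtain ⟨S, rfl⟩ := exists_constructibleSetData_iff.mpr hs
  simp only [ConstructibleSetData.toSet, Set.mem_iUnion] at hbot
  obtain ⟨C, hC, hg, hf⟩ := hbot
  simp only [mem_zeroLocus, Set.singleton_subset_iff, Set.range_subset_iff] at hg hf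
  refine ⟨C.f, hf, fun p hp => Set.mem_biUnion hC ⟨?_, by simpa using hp⟩⟩
  simp only [mem_zeroLocus, Set.range_subset_iff]
  intro i
  rw [Ideal.mem_bot.mp (hg i)]
  exact zero_mem _

theorem Transcendental.finite_setOf_isUnit_sub_algebraMap {k R : Type*} [Field k] [CommRing R]
    [IsDomain R] [Algebra k R] [Algebra.FiniteType k R] {f : R} (hf : Transcendental k f) :
    {c : k | IsUnit (f - algebraMap k R c)}.Finite := by
  set φ : k[X] →+* R := (Polynomial.aeval f).toRingHom
  have hφ : φ.FinitePresentation := by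
    refine RingHom.FinitePresentation.of_finiteType.mp
      (RingHom.FiniteType.of_comp_finiteType (f := C) ?_)
    have : φ.comp C = algebraMap k R := by ext; simp [φ]
    rw [this]
    exact RingHom.finiteType_algebraMap.mpr inferInstance
  have hbot : ⊥ ∈ Set.range (PrimeSpectrum.comap φ) :=
    ⟨⊥, PrimeSpectrum.ext (Ideal.comap_bot_of_injective φ (transcendental_iff_injective.mp hf))⟩
  obtain ⟨a, ha, hsub⟩ := PrimeSpectrum.exists_basicOpen_subset_of_isConstructible
    (PrimeSpectrum.isConstructible_range_comap hφ) hbot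
  refine (finite_setOfPred_isRoot ha).subset fun c hc => ?_
  by_contra hroot
  obtain ⟨Q, hQ⟩ := hsub (a := ⟨RingHom.ker (evalRingHom c), RingHom.ker_isPrime _⟩) hroot
  apply Q.2.ne_top (Ideal.eq_top_of_isUnit_mem _ ?_ hc)
  have : X - C c ∈ (PrimeSpectrum.comap φ Q).asIdeal := by
    rw [hQ]; simp
  simpa [φ] using this

theorem Differential.deriv_coeff_minpoly_eq_zero {k R : Type*} [Field k] [CommRing R]
    [Algebra k R] [Differential k] [Differential R] [DifferentialAlgebra k R] {x : R}
    (hx : x′ = 0) (n : ℕ) : ((minpoly k x).coeff n)′ = 0 := by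
  by_cases hint : IsIntegral k x
  swap
  · simp [minpoly.eq_zero hint]
  have hroot : aeval x (mapCoeffs (minpoly k x)) = 0 := by
    simpa [hx, eq_comm] using deriv_aeval_eq x (minpoly k x)
  have hdeg : (mapCoeffs (minpoly k x)).degree < (minpoly k x).degree := by
    rw [degree_eq_natDegree (minpoly.ne_zero hint), degree_lt_iff_coeff_zero]
    intro m hm
    rw [coeff_mapCoeffs]
    obtain hm | hm := hm.eq_or_lt
    · rw [← hm, (minpoly.monic hint).coeff_natDegree, Derivation.map_one_eq_zero]
    · rw [coeff_eq_zero_of_natDegree_lt hm, map_zero]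
  have : mapCoeffs (minpoly k x) = 0 := by
    by_contra h
    exact (minpoly.degree_le_of_ne_zero k x h hroot).not_gt hdeg
  simpa using congr(coeff $this n)

section DeltaSimple

variable {R Δ : Type*} [CommRing R] {D : Δ → Derivation ℤ R R}

theorem isUnit_of_forall_derivation_eq_zero
    (hsimple : ∀ I : Ideal R, (∀ i, ∀ x ∈ I, D i x ∈ I) → I = ⊥ ∨ I = ⊤)
    {g : R} (hg : ∀ i, D i g = 0) (hg0 : g ≠ 0) : IsUnit g := by
  have hstable : ∀ i, ∀ x ∈ Ideal.span {g}, D i x ∈ Ideal.span {g} := by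
    intro i x hx
    obtain ⟨r, rfl⟩ := Ideal.mem_span_singleton.mp hx
    rw [Derivation.leibniz, hg i, smul_zero, add_zero, smul_eq_mul]
    exact Ideal.mul_mem_right _ _ (Ideal.mem_span_singleton_self g)
  rcases hsimple _ hstable with h | h
  · exact absurd (Ideal.span_singleton_eq_bot.mp h) hg0
  · exact Ideal.span_singleton_eq_top.mp h

theorem isField_of_charP [IsDomain R] (p : ℕ) [Fact p.Prime] [CharP R p]
    (hsimple : ∀ I : Ideal R, (∀ i, ∀ x ∈ I, D i x ∈ I) → I = ⊥ ∨ I = ⊤) : IsField R := by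
  refine ⟨exists_pair_ne R, mul_comm, fun {r} hr => ?_⟩
  have hconst : ∀ i, D i (r ^ p) = 0 := by
    intro i
    rw [Derivation.leibniz_pow, nsmul_eq_mul, CharP.cast_eq_zero, zero_mul]
  have hunit := isUnit_of_forall_derivation_eq_zero hsimple hconst (pow_ne_zero p hr)
  exact ((isUnit_pow_iff (Fact.out : p.Prime).ne_zero).mp hunit).exists_right_inv

theorem isAlgebraic_of_forall_derivation_eq_zero (k : Type*) [Field k] [Algebra k R]
    [Algebra.FiniteType k R] [IsDomain R]
    (hsimple : ∀ I : Ideal R, (∀ i, ∀ x ∈ I, D i x ∈ I) → I = ⊥ ∨ I = ⊤)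
    {f : R} (hf : ∀ i, D i f = 0) : IsAlgebraic k f := by
  obtain ⟨p, hchar⟩ := CharP.exists k
  rcases CharP.char_is_prime_or_zero k p with hp | rfl
  · have := Fact.mk hp
    have := charP_of_injective_algebraMap (algebraMap k R).injective p
    let := (isField_of_charP p hsimple).toField
    have := finite_of_finite_type_of_isJacobsonRing k R
    exact (Algebra.IsIntegral.isIntegral f).isAlgebraic
  · have := CharP.charP_to_charZero k
    by_contra htr
    refine Set.infinite_range_of_injective (Nat.cast_injective (R := k))
      ((Transcendental.finite_setOf_isUnit_sub_algebraMap htr).subset ?_)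
    rintro _ ⟨n, rfl⟩
    refine isUnit_of_forall_derivation_eq_zero hsimple (fun i => by simp [hf i]) ?_
    exact sub_ne_zero.mpr fun h => htr (h ▸ isAlgebraic_algebraMap _)

end DeltaSimple

/-- Let `k` be a `Δ`-field and let `R` be a finitely generated `k`-`Δ`-algebra without
zero divisors (the derivations `D i` of `R` extend the derivations `dk i` of `k`).
If `R` is a simple `Δ`-ring, then every constant `f` of `R` is algebraic over the
field of constants of `k`: there is a nonzero polynomial, all of whose coefficients
are constants of `k`, annihilating `f`. -/
theorem stmt_16 {k R Δ : Type*} [Field k] [CommRing R] [Algebra k R]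
    [Algebra.FiniteType k R] [NoZeroDivisors R]
    (dk : Δ → Derivation ℤ k k) (D : Δ → Derivation ℤ R R)
    (hcompat : ∀ i (c : k), D i (algebraMap k R c) = algebraMap k R (dk i c))
    (hsimple : ∀ I : Ideal R, (∀ i, ∀ x ∈ I, D i x ∈ I) → I = ⊥ ∨ I = ⊤)
    (f : R) (hf : ∀ i, D i f = 0) :
    ∃ p : Polynomial k, p ≠ 0 ∧ (∀ n, ∀ i, dk i (p.coeff n) = 0) ∧
      Polynomial.aeval f p = 0 := by
  have hint : IsIntegral k f := by
    rcases subsingleton_or_nontrivial R with _ | _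
    · exact Algebra.IsIntegral.isIntegral f
    · have := NoZeroDivisors.to_isDomain R
      exact (isAlgebraic_of_forall_derivation_eq_zero k hsimple hf).isIntegral
  refine ⟨minpoly k f, minpoly.ne_zero hint, fun n i => ?_, minpoly.aeval k f⟩
  let : Differential k := ⟨dk i⟩
  let : Differential R := ⟨D i⟩
  have : DifferentialAlgebra k R := ⟨hcompat i⟩
  exact deriv_coeff_minpoly_eq_zero (hf i) n
end

section
/- Let R be a nontrivial commutative ring (0 ≠ 1) that is a ℚ-algebra, equipped with a family (d_i)_{i ∈ Δ} of derivations. Assume that the only prime ideal 𝔭 of R satisfying d_i(𝔭) ⊆ 𝔭 for all i is the zero ideal. Then R is simple: every ideal I of R with d_i(I) ⊆ I for all i is either (0) or R. -/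
section Aux

variable {R : Type*} [CommRing R] [Algebra ℚ R]

/-- Divide by a nonzero natural number inside an ideal of a `ℚ`-algebra. -/
lemma aux_nsmul_mem_div (I : Ideal R) {n : ℕ} (hn : n ≠ 0) {y : R}
    (h : n • y ∈ I) : y ∈ I := by
  have : y = algebraMap ℚ R (1 / n) * (n • y) := by
    rw [nsmul_eq_mul, ← mul_assoc,
      show ((n : R)) = algebraMap ℚ R n by simp, ← map_mul]
    simp [hn]
  rw [this]
  exact I.mul_mem_left _ h

/-- Kaplansky induction step. -/
lemma aux_pow_step (I : Ideal R) (D : Derivation ℤ R R)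
    (hD : ∀ x ∈ I, D x ∈ I) (x : R) (m k : ℕ)
    (hmem : x ^ (m + 1) * (D x) ^ (2 * k + 1) ∈ I) :
    x ^ m * (D x) ^ (2 * (k + 1) + 1) ∈ I := by
  set y := D x with hy
  have h1 : D (x ^ (m + 1) * y ^ (2 * k + 1)) ∈ I := hD _ hmem
  have h2 : D (x ^ (m + 1) * y ^ (2 * k + 1)) * y ∈ I := I.mul_mem_right y h1
  have h3 : (2 * k + 1) • (x ^ (m + 1) * y ^ (2 * k + 1) * D y) ∈ I :=
    nsmul_mem (I.mul_mem_right (D y) hmem) _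
  have key : (m + 1) • (x ^ m * y ^ (2 * (k + 1) + 1)) =
      D (x ^ (m + 1) * y ^ (2 * k + 1)) * y
        - (2 * k + 1) • (x ^ (m + 1) * y ^ (2 * k + 1) * D y) := by
    rw [Derivation.leibniz, Derivation.leibniz_pow, Derivation.leibniz_pow]
    simp only [Nat.add_sub_cancel, smul_eq_mul, nsmul_eq_mul, ← hy]
    push_cast
    ring
  have h4 : (m + 1) • (x ^ m * y ^ (2 * (k + 1) + 1)) ∈ I := by
    rw [key]; exact I.sub_mem h2 h3
  exact aux_nsmul_mem_div I (Nat.succ_ne_zero m) h4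

/-- The radical of a differential ideal is differential (char 0). -/
lemma aux_radical_diff (I : Ideal R) (D : Derivation ℤ R R)
    (hD : ∀ x ∈ I, D x ∈ I) {x : R} (hx : x ∈ I.radical) :
    D x ∈ I.radical := by
  obtain ⟨n, hn⟩ := hx
  rcases n with _ | n'
  · -- x ^ 0 = 1 ∈ I, so I = ⊤
    simp only [pow_zero] at hn
    have hItop : I = ⊤ := (Ideal.eq_top_iff_one I).mpr hn
    exact Ideal.le_radical (by rw [hItop]; trivial)
  · set y := D x with hy
    have base : x ^ n' * y ^ (2 * 0 + 1) ∈ I := by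
      have h1 : D (x ^ (n' + 1)) ∈ I := hD _ hn
      have : (n' + 1) • (x ^ n' * y) ∈ I := by
        have e : D (x ^ (n' + 1)) = (n' + 1) • (x ^ n' * y) := by
          rw [Derivation.leibniz_pow]
          simp [Nat.add_sub_cancel, smul_smul, ← hy, smul_eq_mul]
        rwa [e] at h1
      simpa using aux_nsmul_mem_div I (Nat.succ_ne_zero n') this
    have main : ∀ j, j ≤ n' → x ^ (n' - j) * y ^ (2 * j + 1) ∈ I := by
      intro j
      induction j with
      | zero => intro _; simpa using base
      | succ j ih =>
        intro hj
        have hj' : j ≤ n' := Nat.le_of_succ_le hj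
        have e : n' - j = (n' - (j + 1)) + 1 := by omega
        have := ih hj'
        rw [e] at this
        exact aux_pow_step I D hD x _ j this
    have := main n' le_rfl
    simp only [Nat.sub_self, pow_zero, one_mul] at this
    exact ⟨2 * n' + 1, this⟩

end Aux

/-- Let `R` be a nontrivial commutative `ℚ`-algebra equipped with a family
`(d i)_{i ∈ Δ}` of derivations, and suppose that the only prime `Δ`-ideal of `R` is the
zero ideal. Then `R` is a simple `Δ`-ring: every `Δ`-ideal is `(0)` or `R`. -/
theorem stmt_17 {R Δ : Type*} [CommRing R] [Nontrivial R] [Algebra ℚ R]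
    (d : Δ → Derivation ℤ R R)
    (hprime : ∀ p : Ideal R, p.IsPrime → (∀ i, ∀ x ∈ p, d i x ∈ p) → p = ⊥) :
    ∀ I : Ideal R, (∀ i, ∀ x ∈ I, d i x ∈ I) → I = ⊥ ∨ I = ⊤ := by
  intro I hI
  by_cases hItop : I = ⊤
  · exact Or.inr hItop
  left
  -- the set of proper Δ-ideals containing I
  set S : Set (Ideal R) := {J | I ≤ J ∧ J ≠ ⊤ ∧ ∀ i, ∀ x ∈ J, d i x ∈ J} with hS
  have hIS : I ∈ S := ⟨le_rfl, hItop, hI⟩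
  -- Zorn's lemma: maximal element M of S
  obtain ⟨M, hIM, hMmax⟩ : ∃ M, I ≤ M ∧ Maximal (· ∈ S) M := by
    apply zorn_le_nonempty₀ S ?_ I hIS
    intro c hcS hc J hJc
    refine ⟨sSup c, ⟨?_, ?_, ?_⟩, fun z hz => le_sSup hz⟩
    · exact le_trans (hcS hJc).1 (le_sSup hJc)
    · intro htop
      have h1 : (1 : R) ∈ sSup c := htop ▸ Submodule.mem_top
      obtain ⟨K, hKc, hK1⟩ := (Submodule.mem_sSup_of_directed ⟨J, hJc⟩
        (hc.directedOn)).mp h1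
      exact (hcS hKc).2.1 ((Ideal.eq_top_iff_one K).mpr hK1)
    · intro i x hx
      obtain ⟨K, hKc, hKx⟩ := (Submodule.mem_sSup_of_directed ⟨J, hJc⟩
        (hc.directedOn)).mp hx
      exact le_sSup hKc ((hcS hKc).2.2 i x hKx)
  obtain ⟨hIM', hMtop, hMd⟩ := hMmax.prop
  -- M is radical
  have hMrad : M.radical = M := by
    have hradS : M.radical ∈ S :=
      ⟨le_trans hIM' Ideal.le_radical, by
        simpa [Ideal.radical_eq_top] using hMtop,
        fun i x hx => aux_radical_diff M (d i) (hMd i) hx⟩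
    exact le_antisymm (hMmax.le_of_ge hradS Ideal.le_radical) Ideal.le_radical
  -- key: ab ∈ M → a * d i b ∈ M
  have hmul : ∀ i (a b : R), a * b ∈ M → a * d i b ∈ M := by
    intro i a b hab
    have ht : a * d i b + b * d i a ∈ M := by
      have := hMd i _ hab
      rwa [Derivation.leibniz, smul_eq_mul, smul_eq_mul] at this
    have hsq : (a * d i b) ^ 2 ∈ M := by
      have h1 : (a * d i b) * (a * d i b + b * d i a) ∈ M := M.mul_mem_left _ ht
      have h2 : (a * b) * (d i a * d i b) ∈ M := M.mul_mem_right _ hab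
      have e : (a * d i b) ^ 2 =
          (a * d i b) * (a * d i b + b * d i a) - (a * b) * (d i a * d i b) := by ring
      rw [e]; exact M.sub_mem h1 h2
    have : a * d i b ∈ M.radical := ⟨2, hsq⟩
    rwa [hMrad] at this
  -- M is prime
  have hMprime : M.IsPrime := by
    constructor
    · exact hMtop
    · intro a b hab
      by_cases ha : a ∈ M
      · exact Or.inl ha
      · right
        -- J = {x | a * x ∈ M} is a Δ-ideal in S strictly containing M
        set J : Ideal R :=
          { carrier := {x | a * x ∈ M}
            add_mem' := fun hx hy => by
              simp only [Set.mem_setOf_eq, mul_add] at *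
              exact M.add_mem hx hy
            zero_mem' := by simp
            smul_mem' := fun c x hx => by
              simp only [Set.mem_setOf_eq, smul_eq_mul] at *
              rw [mul_comm c x, ← mul_assoc]
              exact M.mul_mem_right c hx } with hJdef
        have hMJ : M ≤ J := fun x hx => M.mul_mem_left a hx
        have hJS : J ∈ S := by
          refine ⟨le_trans hIM' hMJ, ?_, ?_⟩
          · intro htop
            have h1 : (1 : R) ∈ J := htop ▸ Submodule.mem_top
            have h1' : a * 1 ∈ M := h1
            exact ha (by simpa using h1')
          · intro i x hx
            exact hmul i a x hx
        have : J ≤ M := hMmax.le_of_ge hJS hMJ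
        have hbJ : b ∈ J := hab
        exact this hbJ
  have : M = ⊥ := hprime M hMprime hMd
  exact le_bot_iff.mp (this ▸ hIM')
end

section
/- Let k be a field equipped with a family (∂_i)_{i ∈ Δ} of derivations, and let R be a commutative k-algebra equipped with a family (D_i)_{i ∈ Δ} of derivations extending those of k (i.e. D_i(algebraMap c) = algebraMap(∂_i c) for all c ∈ k and all i). Let f ∈ R be a constant (D_i f = 0 for all i) that is algebraic over k (there is a nonzero polynomial with coefficients in k annihilating f). Then f is algebraic over the constant subfield C(k) = {c ∈ k : ∂_i c = 0 for all i}: there exists a nonzero polynomial with coefficients in C(k) annihilating f. -/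
open Polynomial Finset

/-- Let `k` be a `Δ`-field and `R` a `k`-`Δ`-algebra (the derivations `D i` of `R`
extend the derivations `dk i` of `k`). If `f ∈ R` is a constant which is algebraic
over `k`, then `f` is algebraic over the field of constants of `k`: there is a nonzero
polynomial, all of whose coefficients are constants of `k`, annihilating `f`. -/
theorem stmt_18 {k R Δ : Type*} [Field k] [CommRing R] [Algebra k R]
    (dk : Δ → Derivation ℤ k k) (D : Δ → Derivation ℤ R R)
    (hcompat : ∀ i (c : k), D i (algebraMap k R c) = algebraMap k R (dk i c))
    (f : R) (hf : ∀ i, D i f = 0)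
    (halg : ∃ p : Polynomial k, p ≠ 0 ∧ Polynomial.aeval f p = 0) :
    ∃ q : Polynomial k, q ≠ 0 ∧ (∀ n, ∀ i, dk i (q.coeff n) = 0) ∧
      Polynomial.aeval f q = 0 := by
  classical
  have hex : ∃ n : ℕ, ∃ p : Polynomial k, p ≠ 0 ∧ Polynomial.aeval f p = 0 ∧ p.natDegree = n := by
    obtain ⟨p, hp0, hpv⟩ := halg
    exact ⟨p.natDegree, p, hp0, hpv, rfl⟩
  obtain ⟨p0, hp00, hp0v, hp0d⟩ := Nat.find_spec hex
  -- normalize to monic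
  set p : Polynomial k := p0 * Polynomial.C p0.leadingCoeff⁻¹ with hpdef
  have hpm : p.Monic := Polynomial.monic_mul_leadingCoeff_inv hp00
  have hpne : p ≠ 0 := hpm.ne_zero
  have hpv : Polynomial.aeval f p = 0 := by
    rw [hpdef, map_mul, hp0v, zero_mul]
  have hpd : p.natDegree = Nat.find hex := by
    rw [hpdef, Polynomial.natDegree_mul_C, hp0d]
    exact inv_ne_zero (Polynomial.leadingCoeff_ne_zero.mpr hp00)
  set N := p.natDegree with hN
  refine ⟨p, hpne, ?_, hpv⟩
  intro n i
  set r : Polynomial k := ∑ m ∈ range (N + 1), Polynomial.C (dk i (p.coeff m)) * X ^ m with hrdef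
  have hrc : ∀ m, r.coeff m = dk i (p.coeff m) := by
    intro m
    rw [hrdef, Polynomial.finset_sum_coeff]
    simp only [Polynomial.coeff_C_mul, Polynomial.coeff_X_pow, mul_ite, mul_one, mul_zero]
    rw [Finset.sum_ite_eq (range (N + 1)) m]
    by_cases hm : m ∈ range (N + 1)
    · simp [hm]
    · simp only [hm, if_false]
      have : p.coeff m = 0 := by
        apply Polynomial.coeff_eq_zero_of_natDegree_lt
        simpa [Nat.lt_succ_iff, not_le] using hm
      rw [this, map_zero]
  have hrv : Polynomial.aeval f r = 0 := by
    have h1 : (D i) (Polynomial.aeval f p) = Polynomial.aeval f r := by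
      rw [Polynomial.aeval_eq_sum_range, map_sum]
      have h2 : Polynomial.aeval f r
          = ∑ m ∈ range (N + 1), algebraMap k R (dk i (p.coeff m)) * f ^ m := by
        rw [hrdef, map_sum]
        refine Finset.sum_congr rfl fun m _ => ?_
        rw [map_mul, map_pow, Polynomial.aeval_C, Polynomial.aeval_X]
      rw [h2]
      refine Finset.sum_congr rfl fun m _ => ?_
      rw [Algebra.smul_def, Derivation.leibniz, Derivation.leibniz_pow, hf, smul_zero,
        smul_zero, smul_zero, zero_add, hcompat, smul_eq_mul, mul_comm]
    rw [hpv, map_zero] at h1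
    exact h1.symm
  have hr0 : r = 0 := by
    by_contra hr
    have hlt : r.natDegree < N := by
      rcases lt_or_ge r.natDegree N with h | h
      · exact h
      · exfalso
        have := hrc r.natDegree
        rcases eq_or_lt_of_le h with h' | h'
        · have hone : p.coeff r.natDegree = 1 := by
            rw [← h', hN]; exact hpm.coeff_natDegree
          rw [hone, Derivation.map_one_eq_zero] at this
          exact Polynomial.leadingCoeff_ne_zero.mpr hr this
        · have hz : p.coeff r.natDegree = 0 := Polynomial.coeff_eq_zero_of_natDegree_lt h'
          rw [hz, map_zero] at this
          exact Polynomial.leadingCoeff_ne_zero.mpr hr this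
    exact Nat.find_min hex (hpd ▸ hlt) ⟨r, hr, hrv, rfl⟩
  have := hrc n
  rw [hr0, Polynomial.coeff_zero] at this
  exact this.symm
end
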